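/- arXiv:2506.23807 — 7 statements merged into one kernel-verified Lean document; each statement's English description precedes it below -/
import Mathlib

section
/- Let γ > 3/2, set θ := min{(2/3)γ − 1, 1/2, γ/6}, and let 0 < m ≤ M be real numbers. Then there exists a constant C₀ > 0, depending only on γ, m and M, such that for every ρ_s ∈ [m, M] and every real ρ ≥ 0 one has C₀² (ρ^θ − ρ_s^θ)² ≤ C₀ G(ρ, ρ_s) and C₀ G(ρ, ρ_s) ≤ ρ_s^{−θ} (ρ^γ − ρ_s^γ)(ρ^θ − ρ_s^θ). -/
open Real

namespace GpotAux

lemma bern_ge {t p : ℝ} (ht : 0 ≤ t) (hp : 1 ≤ p) : 1 + p * (t - 1) ≤ t ^ p := by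
  have h := one_add_mul_self_le_rpow_one_add (s := t - 1) (by linarith) hp
  have e : 1 + (t - 1) = t := by ring
  rwa [e] at h

lemma bern_le {t p : ℝ} (ht : 0 ≤ t) (hp0 : 0 ≤ p) (hp1 : p ≤ 1) : t ^ p ≤ 1 + p * (t - 1) := by
  have h := rpow_one_add_le_one_add_mul_self (s := t - 1) (by linarith) hp0 hp1
  have e : 1 + (t - 1) = t := by ring
  rwa [e] at h

lemma split_id {t γ : ℝ} (ht : 0 < t) : t ^ γ = t * t ^ (γ - 1) := by
  have h : t ^ (1 + (γ - 1) : ℝ) = t ^ (1:ℝ) * t ^ (γ - 1) := Real.rpow_add ht _ _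
  have e : (1 + (γ - 1) : ℝ) = γ := by ring
  rw [e, Real.rpow_one] at h
  exact h

lemma log_lin {t p : ℝ} (ht : 0 < t) : 1 + p * log t ≤ t ^ p := by
  have h := Real.add_one_le_exp (log t * p)
  rw [Real.rpow_def_of_pos ht]
  linarith

lemma tangent {t γ : ℝ} (ht : 0 < t) (hγ : 1 ≤ γ) :
    t ^ γ + γ * t ^ (γ - 1) - γ * t ^ γ ≤ 1 := by
  have hu : 0 < t ^ γ := Real.rpow_pos_of_pos ht _
  have hid : t ^ γ = t * t ^ (γ - 1) := split_id ht
  have hber := bern_ge (t := 1/t) (by positivity) hγ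
  have hinv : ((1:ℝ)/t) ^ γ = (t ^ γ)⁻¹ := by rw [one_div, Real.inv_rpow ht.le]
  rw [hinv] at hber
  have h1 : t ^ γ * (1 + γ * (1/t - 1)) ≤ 1 := by
    calc t ^ γ * (1 + γ * (1/t - 1)) ≤ t ^ γ * (t ^ γ)⁻¹ :=
          mul_le_mul_of_nonneg_left hber hu.le
      _ = 1 := mul_inv_cancel₀ hu.ne'
  have h2 : t ^ γ * (1 + γ * (1/t - 1)) = t ^ γ + γ * t ^ (γ - 1) - γ * t ^ γ := by
    rw [hid]; field_simp; ring
  linarith [h2 ▸ h1]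

set_option maxHeartbeats 1000000 in
lemma lemB (γ θ : ℝ) (hγ : 1 < γ) (hθ0 : 0 < θ) (hθ1 : θ ≤ 1) {t : ℝ} (ht : 0 ≤ t) :
    θ * (t ^ γ - γ * t + γ - 1) ≤
      4 * 2 ^ (γ - 1) * (γ - 1) * ((t ^ γ - 1) * (t ^ θ - 1)) := by
  have hβ : 0 < γ - 1 := by linarith
  set c : ℝ := 2 ^ (γ - 1) with hc
  have hcpos : 0 < c := Real.rpow_pos_of_pos (by norm_num) _
  have hc1 : (1:ℝ) ≤ c := Real.one_le_rpow (by norm_num) hβ.le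
  rcases le_or_gt 1 t with ht1 | ht1
  · -- 1 ≤ t
    have ht0 : 0 < t := by linarith
    set u : ℝ := t ^ γ with hu
    set v : ℝ := t ^ (γ - 1) with hv
    set w : ℝ := t ^ θ with hw
    have hid : u = t * v := split_id ht0
    have htan : u + γ * v - γ * u ≤ 1 := tangent ht0 hγ.le
    have hu1 : 1 ≤ u := Real.one_le_rpow ht1 (by linarith)
    have hv1 : 1 ≤ v := Real.one_le_rpow ht1 hβ.le
    have hw1 : 1 ≤ w := Real.one_le_rpow ht1 hθ0.le
    set d : ℝ := t ^ (-(γ - 1)) with hdd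
    have hd : d = v⁻¹ := by rw [hdd, hv, Real.rpow_neg ht0.le]
    have hd0 : 0 < d := Real.rpow_pos_of_pos ht0 _
    have hdv : d * v = 1 := by rw [hd]; exact inv_mul_cancel₀ (by positivity)
    have hd1 : d ≤ 1 := by
      calc d = d * 1 := (mul_one d).symm
        _ ≤ d * v := mul_le_mul_of_nonneg_left hv1 hd0.le
        _ = 1 := hdv
    -- step A : P ≤ (u-1)*(1-d)
    have hA1 : u - 1 ≤ γ * (v * (t - 1)) := by
      have e : v * (t - 1) = u - v := by rw [hid]; ring
      rw [e]; linarith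
    have hA2 : (u - 1) * d ≤ γ * (t - 1) := by
      have h := mul_le_mul_of_nonneg_right hA1 hd0.le
      calc (u - 1) * d ≤ γ * (v * (t - 1)) * d := h
        _ = γ * (t - 1) * (d * v) := by ring
        _ = γ * (t - 1) := by rw [hdv, mul_one]
    have hA : t ^ γ - γ * t + γ - 1 ≤ (u - 1) * (1 - d) := by
      have e : (u - 1) * (1 - d) = (u - 1) - (u - 1) * d := by ring
      rw [e]; linarith
    -- step B : θ*(1-d) ≤ (γ-1)*(w-1)
    have hlt : 0 ≤ log t := Real.log_nonneg ht1
    have hld : 1 - d ≤ (γ - 1) * log t := by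
      have h := log_lin (p := -(γ - 1)) ht0
      rw [← hdd] at h; linarith
    have hlw : θ * log t ≤ w - 1 := by
      have h := log_lin (p := θ) ht0
      rw [← hw] at h; linarith
    have hB : θ * (1 - d) ≤ (γ - 1) * (w - 1) := by
      calc θ * (1 - d) ≤ θ * ((γ - 1) * log t) :=
            mul_le_mul_of_nonneg_left hld hθ0.le
        _ = (γ - 1) * (θ * log t) := by ring
        _ ≤ (γ - 1) * (w - 1) := mul_le_mul_of_nonneg_left hlw hβ.le
    -- combine
    have h1 : θ * (t ^ γ - γ * t + γ - 1) ≤ (u - 1) * ((γ - 1) * (w - 1)) := by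
      calc θ * (t ^ γ - γ * t + γ - 1) ≤ θ * ((u - 1) * (1 - d)) :=
            mul_le_mul_of_nonneg_left hA hθ0.le
        _ = (u - 1) * (θ * (1 - d)) := by ring
        _ ≤ (u - 1) * ((γ - 1) * (w - 1)) :=
            mul_le_mul_of_nonneg_left hB (by linarith)
    have h2 : (u - 1) * ((γ - 1) * (w - 1)) ≤ 4 * c * (γ - 1) * ((u - 1) * (w - 1)) := by
      have hh : 0 ≤ (4 * c - 1) * ((γ - 1) * ((u - 1) * (w - 1))) :=
        mul_nonneg (by linarith)
          (mul_nonneg hβ.le (mul_nonneg (by linarith) (by linarith)))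
      nlinarith [hh]
    calc θ * (t ^ γ - γ * t + γ - 1) ≤ (u - 1) * ((γ - 1) * (w - 1)) := h1
      _ ≤ 4 * c * (γ - 1) * ((u - 1) * (w - 1)) := h2
      _ = 4 * 2 ^ (γ - 1) * (γ - 1) * ((u - 1) * (w - 1)) := by rw [hc]
  · rcases le_or_gt (1/2) t with ht2 | ht2
    · -- 1/2 ≤ t < 1
      have ht0 : 0 < t := by linarith
      set u : ℝ := t ^ γ with hu
      set v : ℝ := t ^ (γ - 1) with hv
      set w : ℝ := t ^ θ with hw
      have hid : u = t * v := split_id ht0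
      have htan : u + γ * v - γ * u ≤ 1 := tangent ht0 hγ.le
      have hu1 : u ≤ 1 := Real.rpow_le_one ht ht1.le (by linarith)
      have hv1 : v ≤ 1 := Real.rpow_le_one ht ht1.le hβ.le
      have hw1 : w ≤ 1 := Real.rpow_le_one ht ht1.le hθ0.le
      have hvpos : 0 < v := Real.rpow_pos_of_pos ht0 _
      set d : ℝ := t ^ (-(γ - 1)) with hdd
      have hd : d = v⁻¹ := by rw [hdd, hv, Real.rpow_neg ht0.le]
      have hd0 : 0 < d := Real.rpow_pos_of_pos ht0 _
      have hdv : d * v = 1 := by rw [hd]; exact inv_mul_cancel₀ (by positivity)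
      -- d ≤ c
      have hvc : c⁻¹ ≤ v := by
        have h := Real.rpow_le_rpow (by norm_num : (0:ℝ) ≤ 1/2) ht2 hβ.le
        rwa [one_div, Real.inv_rpow (by norm_num : (0:ℝ) ≤ 2), ← hc, ← hv] at h
      have h1cv : 1 ≤ c * v := by
        calc (1:ℝ) = c * c⁻¹ := (mul_inv_cancel₀ hcpos.ne').symm
          _ ≤ c * v := mul_le_mul_of_nonneg_left hvc hcpos.le
      have hdc : d ≤ c := by
        calc d = d * 1 := (mul_one d).symm
          _ ≤ d * (c * v) := mul_le_mul_of_nonneg_left h1cv hd0.le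
          _ = c * (d * v) := by ring
          _ = c := by rw [hdv, mul_one]
      -- step A : P ≤ (1-u)*(d-1)
      have hA1 : γ * (v * (1 - t)) ≤ 1 - u := by
        have e : v * (1 - t) = v - u := by rw [hid]; ring
        rw [e]; linarith
      have hA2 : γ * (1 - t) ≤ (1 - u) * d := by
        have h := mul_le_mul_of_nonneg_right hA1 hd0.le
        calc γ * (1 - t) = γ * (v * (1 - t)) * d := by
              rw [mul_comm d v] at hdv
              calc γ * (1 - t) = γ * (1 - t) * (v * d) := by rw [hdv, mul_one]
                _ = γ * (v * (1 - t)) * d := by ring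
          _ ≤ (1 - u) * d := h
      have hA : t ^ γ - γ * t + γ - 1 ≤ (1 - u) * (d - 1) := by
        have e : (1 - u) * (d - 1) = (1 - u) * d - (1 - u) := by ring
        rw [e]; linarith
      -- step B : θ*(d-1) ≤ 2*c*(γ-1)*(1-w)
      have hd1 : d - 1 ≤ c * (1 - v) := by
        have e : d - 1 = d * (1 - v) := by
          have : d * v = 1 := hdv
          nlinarith
        rw [e]
        exact mul_le_mul_of_nonneg_right hdc (by linarith)
      have hlv : 1 - v ≤ (γ - 1) * (-log t) := by
        have h := Real.log_le_sub_one_of_pos hvpos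
        rw [hv, Real.log_rpow ht0] at h
        linarith
      have hnlt : -log t ≤ 2 * (1 - t) := by
        have h := Real.log_le_sub_one_of_pos (by positivity : (0:ℝ) < t⁻¹)
        rw [Real.log_inv] at h
        have h4 : 1 / t ≤ 3 - 2 * t := by
          rw [div_le_iff₀ ht0]; nlinarith
        have h5 : t⁻¹ = 1 / t := inv_eq_one_div t
        linarith
      have hwt : θ * (1 - t) ≤ 1 - w := by
        have h := bern_le (t := t) (p := θ) ht hθ0.le hθ1
        rw [← hw] at h; linarith
      have hB : θ * (d - 1) ≤ 2 * c * (γ - 1) * (1 - w) := by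
        have s1 : θ * (d - 1) ≤ θ * (c * ((γ - 1) * (2 * (1 - t)))) := by
          apply mul_le_mul_of_nonneg_left _ hθ0.le
          calc d - 1 ≤ c * (1 - v) := hd1
            _ ≤ c * ((γ - 1) * (-log t)) :=
                mul_le_mul_of_nonneg_left hlv hcpos.le
            _ ≤ c * ((γ - 1) * (2 * (1 - t))) := by
                apply mul_le_mul_of_nonneg_left _ hcpos.le
                exact mul_le_mul_of_nonneg_left hnlt hβ.le
        calc θ * (d - 1) ≤ θ * (c * ((γ - 1) * (2 * (1 - t)))) := s1
          _ = 2 * c * (γ - 1) * (θ * (1 - t)) := by ring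
          _ ≤ 2 * c * (γ - 1) * (1 - w) := by
              apply mul_le_mul_of_nonneg_left hwt (by positivity)
      -- combine
      have h1 : θ * (t ^ γ - γ * t + γ - 1) ≤ (1 - u) * (2 * c * (γ - 1) * (1 - w)) := by
        calc θ * (t ^ γ - γ * t + γ - 1) ≤ θ * ((1 - u) * (d - 1)) :=
              mul_le_mul_of_nonneg_left hA hθ0.le
          _ = (1 - u) * (θ * (d - 1)) := by ring
          _ ≤ (1 - u) * (2 * c * (γ - 1) * (1 - w)) :=
              mul_le_mul_of_nonneg_left hB (by linarith)
      have h2 : (1 - u) * (2 * c * (γ - 1) * (1 - w)) ≤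
          4 * c * (γ - 1) * ((u - 1) * (w - 1)) := by
        have hh : 0 ≤ 2 * c * (γ - 1) * ((1 - u) * (1 - w)) :=
          mul_nonneg (mul_nonneg (mul_nonneg (by norm_num) hcpos.le) hβ.le)
            (mul_nonneg (by linarith) (by linarith))
        have e : 4 * c * (γ - 1) * ((u - 1) * (w - 1)) =
            (1 - u) * (2 * c * (γ - 1) * (1 - w)) + 2 * c * (γ - 1) * ((1 - u) * (1 - w)) := by
          ring
        rw [e]; linarith
      linarith
    · -- 0 ≤ t < 1/2
      set u : ℝ := t ^ γ with hu
      set w : ℝ := t ^ θ with hw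
      have hut : u ≤ t := by
        have h := Real.rpow_le_rpow_of_exponent_ge' ht (by linarith) (by norm_num) hγ.le
        rwa [Real.rpow_one, ← hu] at h
      have hP : t ^ γ - γ * t + γ - 1 ≤ γ - 1 := by
        have : u ≤ γ * t := by nlinarith
        rw [← hu]; linarith
      have hwb : w ≤ 1 + θ * (t - 1) := by
        have h := bern_le (t := t) (p := θ) ht hθ0.le hθ1
        rwa [← hw] at h
      have h1w : θ / 2 ≤ 1 - w := by
        have hh : θ * t ≤ θ * (1/2) := mul_le_mul_of_nonneg_left ht2.le hθ0.le
        linarith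
      have h1u : 1/2 ≤ 1 - u := by linarith
      have hprod : θ / 4 ≤ (u - 1) * (w - 1) := by
        have hh : (1/2 : ℝ) * (θ/2) ≤ (1 - u) * (1 - w) :=
          mul_le_mul h1u h1w (by positivity) (by linarith)
        have e : (u - 1) * (w - 1) = (1 - u) * (1 - w) := by ring
        rw [e]; linarith
      have hcc : 4 * 1 * (γ - 1) * (θ / 4) ≤ 4 * c * (γ - 1) * (θ / 4) := by
        have hh : 0 ≤ (c - 1) * ((γ - 1) * θ) :=
          mul_nonneg (by linarith) (by positivity)
        nlinarith [hh]
      calc θ * (t ^ γ - γ * t + γ - 1) ≤ θ * (γ - 1) :=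
            mul_le_mul_of_nonneg_left hP hθ0.le
        _ = 4 * 1 * (γ - 1) * (θ / 4) := by ring
        _ ≤ 4 * c * (γ - 1) * (θ / 4) := hcc
        _ ≤ 4 * c * (γ - 1) * ((u - 1) * (w - 1)) := by
            apply mul_le_mul_of_nonneg_left hprod (by positivity)

set_option maxHeartbeats 1000000 in
lemma lemA (γ θ : ℝ) (hγ : 1 < γ) (hθ0 : 0 < θ) (hθβ : θ ≤ γ - 1) (hθ1 : θ ≤ 1)
    {t : ℝ} (ht : 0 ≤ t) :
    min (γ - 1) 1 * (t ^ θ - 1) ^ 2 ≤ t ^ γ - γ * t + γ - 1 := by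
  have hβ : 0 < γ - 1 := by linarith
  have hb1 : min (γ - 1) 1 ≤ 1 := min_le_right _ _
  have hbβ : min (γ - 1) 1 ≤ γ - 1 := min_le_left _ _
  have hb0 : 0 < min (γ - 1) 1 := lt_min hβ one_pos
  rcases eq_or_lt_of_le ht with h0 | ht0
  · -- t = 0
    rw [← h0, Real.zero_rpow hθ0.ne', Real.zero_rpow (by linarith : γ ≠ 0)]
    nlinarith
  -- t > 0
  set v : ℝ := t ^ (γ - 1) with hv
  have hvpos : 0 < v := Real.rpow_pos_of_pos ht0 _
  have hid : t ^ γ = t * v := split_id ht0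
  set w : ℝ := t ^ θ with hw
  have hwpos : 0 < w := Real.rpow_pos_of_pos ht0 _
  rcases le_or_gt 1 t with ht1 | ht1
  · -- 1 ≤ t
    have hw_t : w ≤ t := by
      have := Real.rpow_le_rpow_of_exponent_le ht1 hθ1
      rwa [Real.rpow_one] at this
    have hw_v : w ≤ v := Real.rpow_le_rpow_of_exponent_le ht1 hθβ
    have hw_1 : 1 ≤ w := Real.one_le_rpow ht1 hθ0.le
    have sq : (w - 1) ^ 2 ≤ (t - 1) * (v - 1) := by nlinarith
    have key : min (γ - 1) 1 * ((t - 1) * (v - 1)) ≤ t ^ γ - γ * t + γ - 1 := by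
      rcases le_or_gt 1 (γ - 1) with hβ1 | hβ1
      · -- γ - 1 ≥ 1, min = 1
        have hber : 1 + (γ - 1) * (t - 1) ≤ v := bern_ge ht hβ1
        have h1 : (t - 1) * (v - 1) ≤ t * (v - 1) - (γ - 1) * (t - 1) := by nlinarith
        have hmin : min (γ - 1) 1 = 1 := min_eq_right hβ1
        rw [hmin, hid]; nlinarith
      · -- γ - 1 < 1, min = γ - 1
        have hmin : min (γ - 1) 1 = γ - 1 := min_eq_left hβ1.le
        -- t^(1-(γ-1)) ≤ 1 + (1-(γ-1))(t-1)  (Bernoulli, exponent ≤ 1)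
        have hber : t ^ (1 - (γ-1) : ℝ) ≤ 1 + (1 - (γ-1)) * (t - 1) :=
          bern_le ht (by linarith) (by linarith)
        have huv : v * t ^ (1 - (γ-1) : ℝ) = t := by
          rw [hv, ← Real.rpow_add ht0]; norm_num
        have h1v : 1 ≤ v := Real.one_le_rpow ht1 (by linarith)
        -- v * (1 + (1-β)(t-1)) ≥ v * t^(1-β) = t, so t*(v-1) - β(t-1) ≥ β(t-1)(v-1)
        have h2 : t ≤ v * (1 + (1 - (γ-1)) * (t - 1)) := by
          calc t = v * t ^ (1 - (γ-1) : ℝ) := huv.symm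
            _ ≤ v * (1 + (1 - (γ-1)) * (t - 1)) :=
                mul_le_mul_of_nonneg_left hber hvpos.le
        rw [hmin, hid]; nlinarith
    calc min (γ - 1) 1 * (w - 1) ^ 2 ≤ min (γ - 1) 1 * ((t - 1) * (v - 1)) :=
          mul_le_mul_of_nonneg_left sq hb0.le
      _ ≤ _ := key
  · -- t < 1
    have hw_t : t ≤ w := by
      have := Real.rpow_le_rpow_of_exponent_ge ht0 ht1.le hθ1
      rwa [Real.rpow_one] at this
    have hv_w : v ≤ w := Real.rpow_le_rpow_of_exponent_ge ht0 ht1.le hθβ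
    have hw_1 : w ≤ 1 := Real.rpow_le_one ht ht1.le hθ0.le
    rcases le_or_gt 1 (γ - 1) with hβ1 | hβ1
    · -- β ≥ 1 : P ≥ β (1-t)^2 and (w-1)^2 ≤ (1-t)^2
      have hber : 1 + (γ - 1) * (t - 1) ≤ v := bern_ge ht hβ1
      have hP : (γ - 1) * (1 - t) ^ 2 ≤ t ^ γ - γ * t + γ - 1 := by
        rw [hid]; nlinarith
      have sq : (w - 1) ^ 2 ≤ (1 - t) ^ 2 := by nlinarith
      nlinarith
    · -- β < 1, min = β : P ≥ β (1-t)(1-v)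
      have hmin : min (γ - 1) 1 = γ - 1 := min_eq_left hβ1.le
      have hber : t ^ (1 - (γ-1) : ℝ) ≤ 1 + (1 - (γ-1)) * (t - 1) :=
        bern_le ht (by linarith) (by linarith)
      have huv : v * t ^ (1 - (γ-1) : ℝ) = t := by
        rw [hv, ← Real.rpow_add ht0]; norm_num
      have hv1 : v ≤ 1 := Real.rpow_le_one ht ht1.le (by linarith)
      -- v(1-u)... : v*(1 - ...) ; need v * t^(1-β) = t and bound
      have h2 : t ≤ v * (1 + (1 - (γ-1)) * (t - 1)) := by
        calc t = v * t ^ (1 - (γ-1) : ℝ) := huv.symm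
          _ ≤ v * (1 + (1 - (γ-1)) * (t - 1)) :=
              mul_le_mul_of_nonneg_left hber hvpos.le
      have hP : (γ - 1) * ((1 - t) * (1 - v)) ≤ t ^ γ - γ * t + γ - 1 := by
        rw [hid]; nlinarith
      have sq : (w - 1) ^ 2 ≤ (1 - t) * (1 - v) := by nlinarith
      rw [hmin]
      calc (γ-1) * (w - 1) ^ 2 ≤ (γ-1) * ((1 - t) * (1 - v)) :=
            mul_le_mul_of_nonneg_left sq hβ.le
        _ ≤ _ := hP

end GpotAux


/-- The relative pressure potential `G(ρ, ρ_s)`. -/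
noncomputable def Gpot (γ ρ ρs : ℝ) : ℝ :=
  (1 / (γ - 1)) * ρ ^ γ - (γ / (γ - 1)) * ρ * ρs ^ (γ - 1) + ρs ^ γ

set_option maxHeartbeats 1000000 in
theorem Gpot_two_sided_bound
    (γ θ m M : ℝ) (hγ : 3 / 2 < γ)
    (hθ : θ = min ((2 / 3) * γ - 1) (min (1 / 2) (γ / 6)))
    (hm : 0 < m) (hmM : m ≤ M) :
    ∃ C₀ > 0, ∀ ρs : ℝ, m ≤ ρs → ρs ≤ M → ∀ ρ : ℝ, 0 ≤ ρ →
      C₀ ^ 2 * (ρ ^ θ - ρs ^ θ) ^ 2 ≤ C₀ * Gpot γ ρ ρs ∧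
      C₀ * Gpot γ ρ ρs ≤ ρs ^ (-θ) * (ρ ^ γ - ρs ^ γ) * (ρ ^ θ - ρs ^ θ) := by
  have hγ1 : 1 < γ := by linarith
  have hβ : 0 < γ - 1 := by linarith
  have hθ0 : 0 < θ := by
    rw [hθ]; exact lt_min (by linarith) (lt_min (by norm_num) (by linarith))
  have hθh : θ ≤ 1/2 := by
    rw [hθ]; exact le_trans (min_le_right _ _) (min_le_left _ _)
  have hθ1 : θ ≤ 1 := by linarith
  have hθβ : θ ≤ γ - 1 := by
    have h := hθ ▸ min_le_left ((2 / 3) * γ - 1) (min (1/2 : ℝ) (γ/6))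
    linarith
  have hθ6 : θ ≤ γ / 6 := by
    rw [hθ]; exact le_trans (min_le_right _ _) (min_le_right _ _)
  have hexp : 0 < γ - 2 * θ := by linarith
  set b : ℝ := min (γ - 1) 1 with hb
  have hb0 : 0 < b := lt_min hβ one_pos
  set Ka : ℝ := 4 * 2 ^ (γ - 1) * (γ - 1) with hKa
  have hc0 : (0:ℝ) < 2 ^ (γ - 1) := Real.rpow_pos_of_pos (by norm_num) _
  have hKa0 : 0 < Ka := by
    rw [hKa]; exact mul_pos (mul_pos (by norm_num) hc0) hβ
  have hm1 : 0 < m ^ (γ - 2 * θ) := Real.rpow_pos_of_pos hm _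
  set C₀ : ℝ := min (m ^ (γ - 2 * θ) * b / (γ - 1)) (θ * (γ - 1) / Ka) with hC
  have hC0 : 0 < C₀ :=
    lt_min (div_pos (mul_pos hm1 hb0) hβ) (div_pos (mul_pos hθ0 hβ) hKa0)
  refine ⟨C₀, hC0, ?_⟩
  intro s hms hsM ρ hρ0
  have hs : 0 < s := lt_of_lt_of_le hm hms
  set t : ℝ := ρ / s with htdef
  have ht : 0 ≤ t := div_nonneg hρ0 hs.le
  have hρst : ρ = s * t := by rw [htdef]; field_simp
  have hrγ : ρ ^ γ = s ^ γ * t ^ γ := by rw [hρst, Real.mul_rpow hs.le ht]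
  have hrθ : ρ ^ θ = s ^ θ * t ^ θ := by rw [hρst, Real.mul_rpow hs.le ht]
  have hsplit : s ^ γ = s * s ^ (γ - 1) := GpotAux.split_id hs
  have hsγ : 0 < s ^ γ := Real.rpow_pos_of_pos hs _
  have hsθ : 0 < s ^ θ := Real.rpow_pos_of_pos hs _
  have hse : 0 < s ^ (γ - 2 * θ) := Real.rpow_pos_of_pos hs _
  clear_value t
  set P : ℝ := t ^ γ - γ * t + γ - 1 with hPdef
  have hG : Gpot γ ρ s = s ^ γ * P / (γ - 1) := by
    simp only [Gpot]
    rw [hrγ, hρst, hPdef, hsplit]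
    field_simp
    ring
  have hPA : b * (t ^ θ - 1) ^ 2 ≤ P := GpotAux.lemA γ θ hγ1 hθ0 hθβ hθ1 ht
  have hPB : θ * P ≤ Ka * ((t ^ γ - 1) * (t ^ θ - 1)) :=
    GpotAux.lemB γ θ hγ1 hθ0 hθ1 ht
  have hP0 : 0 ≤ P := le_trans (mul_nonneg hb0.le (sq_nonneg _)) hPA
  constructor
  · -- first inequality
    have hD : (ρ ^ θ - s ^ θ) ^ 2 = (s ^ θ) ^ 2 * (t ^ θ - 1) ^ 2 := by
      rw [hrθ]; ring
    have hssq : s ^ (γ - 2 * θ) * ((s ^ θ) ^ 2) = s ^ γ := by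
      have e2 : γ - 2 * θ + (θ + θ) = γ := by ring
      have e3 : s ^ (γ - 2 * θ + (θ + θ)) = s ^ (γ - 2 * θ) * (s ^ θ * s ^ θ) := by
        rw [Real.rpow_add hs, Real.rpow_add hs]
      calc s ^ (γ - 2 * θ) * (s ^ θ) ^ 2
          = s ^ (γ - 2 * θ) * (s ^ θ * s ^ θ) := by ring
        _ = s ^ (γ - 2 * θ + (θ + θ)) := e3.symm
        _ = s ^ γ := by rw [e2]
    have key : C₀ * (ρ ^ θ - s ^ θ) ^ 2 ≤ Gpot γ ρ s := by
      rw [hD, hG]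
      have hQ0 : (0:ℝ) ≤ (s ^ θ) ^ 2 * (t ^ θ - 1) ^ 2 :=
        mul_nonneg (sq_nonneg _) (sq_nonneg _)
      have hC1 : C₀ ≤ m ^ (γ - 2 * θ) * b / (γ - 1) := min_le_left _ _
      have hmss : m ^ (γ - 2 * θ) ≤ s ^ (γ - 2 * θ) :=
        Real.rpow_le_rpow hm.le hms hexp.le
      calc C₀ * ((s ^ θ) ^ 2 * (t ^ θ - 1) ^ 2)
          ≤ m ^ (γ - 2 * θ) * b / (γ - 1) * ((s ^ θ) ^ 2 * (t ^ θ - 1) ^ 2) :=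
            mul_le_mul_of_nonneg_right hC1 hQ0
        _ ≤ s ^ (γ - 2 * θ) * b / (γ - 1) * ((s ^ θ) ^ 2 * (t ^ θ - 1) ^ 2) := by
            apply mul_le_mul_of_nonneg_right _ hQ0
            apply div_le_div_of_nonneg_right ?_ hβ.le
            exact mul_le_mul_of_nonneg_right hmss hb0.le
        _ = s ^ (γ - 2 * θ) * ((s ^ θ) ^ 2) * (b * (t ^ θ - 1) ^ 2) / (γ - 1) := by
            ring
        _ = s ^ γ * (b * (t ^ θ - 1) ^ 2) / (γ - 1) := by rw [hssq]
        _ ≤ s ^ γ * P / (γ - 1) := by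
            apply div_le_div_of_nonneg_right ?_ hβ.le
            exact mul_le_mul_of_nonneg_left hPA hsγ.le
    calc C₀ ^ 2 * (ρ ^ θ - s ^ θ) ^ 2 = C₀ * (C₀ * (ρ ^ θ - s ^ θ) ^ 2) := by ring
      _ ≤ C₀ * Gpot γ ρ s := mul_le_mul_of_nonneg_left key hC0.le
  · -- second inequality
    have hinv : s ^ (-θ) * s ^ θ = 1 := by
      rw [← Real.rpow_add hs]; norm_num
    have hR : s ^ (-θ) * (ρ ^ γ - s ^ γ) * (ρ ^ θ - s ^ θ)
        = s ^ γ * ((t ^ γ - 1) * (t ^ θ - 1)) := by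
      rw [hrγ, hrθ]
      have e : s ^ (-θ) * (s ^ γ * t ^ γ - s ^ γ) * (s ^ θ * t ^ θ - s ^ θ)
          = (s ^ (-θ) * s ^ θ) * (s ^ γ * ((t ^ γ - 1) * (t ^ θ - 1))) := by ring
      rw [e, hinv, one_mul]
    rw [hR, hG]
    have hC2 : C₀ ≤ θ * (γ - 1) / Ka := min_le_right _ _
    have step : C₀ * P ≤ (γ - 1) * ((t ^ γ - 1) * (t ^ θ - 1)) := by
      calc C₀ * P ≤ θ * (γ - 1) / Ka * P := mul_le_mul_of_nonneg_right hC2 hP0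
        _ = (γ - 1) / Ka * (θ * P) := by ring
        _ ≤ (γ - 1) / Ka * (Ka * ((t ^ γ - 1) * (t ^ θ - 1))) :=
            mul_le_mul_of_nonneg_left hPB (div_nonneg hβ.le hKa0.le)
        _ = (γ - 1) * ((t ^ γ - 1) * (t ^ θ - 1)) := by
            field_simp
    calc C₀ * (s ^ γ * P / (γ - 1)) = s ^ γ / (γ - 1) * (C₀ * P) := by ring
      _ ≤ s ^ γ / (γ - 1) * ((γ - 1) * ((t ^ γ - 1) * (t ^ θ - 1))) :=
          mul_le_mul_of_nonneg_left step (div_nonneg hsγ.le hβ.le)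
      _ = s ^ γ * ((t ^ γ - 1) * (t ^ θ - 1)) := by
          field_simp
end

section
/- Let γ > 3/2, set θ := min{(2/3)γ − 1, 1/2, γ/6}, and let 0 < m ≤ M be real numbers. Then there exists a constant C > 0, depending only on γ, m and M, such that for every ρ_s ∈ [m, M] and every real ρ ≥ 0 one has (ρ^θ − ρ_s^θ)² + |ρ^θ − ρ_s^θ|^{1/θ} ≤ C G(ρ, ρ_s). -/
open Real Set


-- L1: |t^θ - 1| ≤ |t - 1|
lemma abs_rpow_sub_one_le {t θ : ℝ} (ht : 0 ≤ t) (hθ0 : 0 < θ) (hθ1 : θ ≤ 1) :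
    |t ^ θ - 1| ≤ |t - 1| := by
  rcases le_total t 1 with h | h
  · have h1 : t ^ θ ≤ 1 := Real.rpow_le_one ht h hθ0.le
    have h2 : t ≤ t ^ θ := by
      rcases eq_or_lt_of_le ht with rfl | ht'
      · simp [Real.zero_rpow hθ0.ne']
      · calc t = t ^ (1:ℝ) := (Real.rpow_one t).symm
          _ ≤ t ^ θ := Real.rpow_le_rpow_of_exponent_ge ht' h hθ1
    rw [abs_of_nonpos (by linarith), abs_of_nonpos (by linarith)]
    linarith
  · have h1 : 1 ≤ t ^ θ := Real.one_le_rpow h hθ0.le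
    have h2 : t ^ θ ≤ t := by
      calc t ^ θ ≤ t ^ (1:ℝ) := Real.rpow_le_rpow_of_exponent_le h hθ1
        _ = t := Real.rpow_one t
    rw [abs_of_nonneg (by linarith), abs_of_nonneg (by linarith)]
    linarith

-- slope bounds for s ↦ s^α around 1, with κ = min 1 α * min 1 (T^(α-1))
lemma slope_low {α T t : ℝ} (hα : 0 < α) (hT : 1 ≤ T) (ht0 : 0 ≤ t) (ht1 : t ≤ 1) :
    t ^ α - 1 ≤ (min 1 α * min 1 (T ^ (α - 1))) * (t - 1) := by
  have hκT : 0 < T ^ (α - 1) := Real.rpow_pos_of_pos (by linarith) _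
  have hκT1 : min 1 (T ^ (α - 1)) ≤ 1 := min_le_left _ _
  have hκT0 : 0 < min 1 (T ^ (α - 1)) := lt_min one_pos hκT
  have key : t ^ α - 1 ≤ min 1 α * (t - 1) := by
    rcases le_total α 1 with hα1 | hα1
    · have hb := rpow_one_add_le_one_add_mul_self (s := t - 1) (by linarith) hα.le hα1
      simp only [add_sub_cancel] at hb
      rw [min_eq_right hα1]
      linarith
    · have h2 : t ^ α ≤ t := by
        rcases eq_or_lt_of_le ht0 with rfl | ht'
        · simp [Real.zero_rpow (by linarith : α ≠ 0)]
        · calc t ^ α ≤ t ^ (1:ℝ) := Real.rpow_le_rpow_of_exponent_ge ht' ht1 hα1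
            _ = t := Real.rpow_one t
      rw [min_eq_left hα1]
      linarith
  have hmin0 : 0 < min 1 α := lt_min one_pos hα
  nlinarith [mul_le_mul_of_nonneg_left (sub_nonneg.2 ht1) hmin0.le]

lemma slope_high {α T t : ℝ} (hα : 0 < α) (hT : 1 ≤ T) (ht1 : 1 ≤ t) (htT : t ≤ T) :
    (min 1 α * min 1 (T ^ (α - 1))) * (t - 1) ≤ t ^ α - 1 := by
  have htpos : (0:ℝ) < t := by linarith
  rcases le_total 1 α with hα1 | hα1
  · -- α ≥ 1 : Bernoulli gives t^α - 1 ≥ α (t-1) ≥ (t-1) ≥ κ (t-1)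
    have hb := one_add_mul_self_le_rpow_one_add (s := t - 1) (by linarith) hα1
    simp only [add_sub_cancel] at hb
    have hκ1 : min 1 α * min 1 (T ^ (α - 1)) ≤ 1 := by
      have h1 : min 1 α ≤ 1 := min_le_left _ _
      have h2 : min 1 (T ^ (α - 1)) ≤ 1 := min_le_left _ _
      have h3 : (0:ℝ) ≤ min 1 (T ^ (α - 1)) :=
        le_min zero_le_one (Real.rpow_pos_of_pos (by linarith) _).le
      nlinarith
    nlinarith [mul_le_mul_of_nonneg_right hκ1 (sub_nonneg.2 ht1)]
  · -- α ≤ 1 : t^α - 1 ≥ α t^(α-1) (t-1) ≥ α T^(α-1) (t-1) = κ (t-1)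
    have hTpow_le1 : T ^ (α - 1) ≤ 1 :=
      Real.rpow_le_one_of_one_le_of_nonpos hT (by linarith)
    have hκ : min 1 α * min 1 (T ^ (α - 1)) = α * T ^ (α - 1) := by
      rw [min_eq_right hα1, min_eq_right hTpow_le1]
    rw [hκ]
    -- Bernoulli at v = t⁻¹
    have hv0 : (0:ℝ) ≤ t⁻¹ := by positivity
    have hv1 : t⁻¹ ≤ 1 := by
      rw [inv_le_one_iff₀]; right; exact ht1
    have hb := rpow_one_add_le_one_add_mul_self (s := t⁻¹ - 1) (by linarith) hα.le hα1
    simp only [add_sub_cancel] at hb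
    -- multiply by t^α
    have htα : (0:ℝ) < t ^ α := Real.rpow_pos_of_pos htpos _
    have hmul : t⁻¹ ^ α * t ^ α = 1 := by
      rw [← Real.mul_rpow hv0 htpos.le, inv_mul_cancel₀ htpos.ne', Real.one_rpow]
    have hsub : t ^ α * t⁻¹ = t ^ (α - 1) := by
      rw [Real.rpow_sub htpos, Real.rpow_one]
      ring
    have key : α * t ^ (α - 1) * (t - 1) ≤ t ^ α - 1 := by
      have := mul_le_mul_of_nonneg_right hb htα.le
      rw [hmul] at this
      have expand : (1 + α * (t⁻¹ - 1)) * t ^ α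
          = t ^ α + α * (t ^ α * t⁻¹) - α * t ^ α := by ring
      rw [expand, hsub] at this
      have hts : t ^ (α - 1) * t = t ^ α := by
        have h := Real.rpow_add htpos (α - 1) 1
        rw [Real.rpow_one] at h
        rw [← h]
        norm_num
      nlinarith [hts]
    have hmono : T ^ (α - 1) ≤ t ^ (α - 1) :=
      Real.rpow_le_rpow_of_nonpos htpos htT (by linarith)
    nlinarith [mul_le_mul_of_nonneg_right hmono (sub_nonneg.2 ht1), hα.le]

lemma bregman_quad {γ κ T : ℝ} (hγ : 1 < γ) (hκ : 0 < κ) (hT : 1 ≤ T)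
    (hlow : ∀ t : ℝ, 0 ≤ t → t ≤ 1 → t ^ (γ - 1) - 1 ≤ κ * (t - 1))
    (hhigh : ∀ t : ℝ, 1 ≤ t → t ≤ T → κ * (t - 1) ≤ t ^ (γ - 1) - 1) :
    ∀ t : ℝ, 0 ≤ t → t ≤ T →
      (γ * κ / 2) * (t - 1) ^ 2 ≤ t ^ γ - γ * t + (γ - 1) := by
  set c := γ * κ / 2 with hc
  set D : ℝ → ℝ := fun t => t ^ γ - γ * t + (γ - 1) - c * (t - 1) ^ 2 with hD
  have hγ0 : (0:ℝ) < γ := by linarith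
  have hderiv : ∀ x : ℝ, x ≠ 0 →
      HasDerivAt D (γ * (x ^ (γ - 1) - 1) - γ * κ * (x - 1)) x := by
    intro x hx
    have h1 : HasDerivAt (fun t : ℝ => t ^ γ) (γ * x ^ (γ - 1)) x :=
      Real.hasDerivAt_rpow_const (Or.inl hx)
    have h2 : HasDerivAt (fun t : ℝ => γ * t) γ x := by
      simpa using (hasDerivAt_id x).const_mul γ
    have h3 : HasDerivAt (fun t : ℝ => c * (t - 1) ^ 2) (c * (2 * (x - 1))) x := by
      have hb : HasDerivAt (fun t : ℝ => (t - 1) ^ 2) (2 * (x - 1)) x := by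
        have h0 : HasDerivAt (fun t : ℝ => t - 1) 1 x := (hasDerivAt_id x).sub_const 1
        simpa using h0.fun_pow 2
      exact hb.const_mul c
    have := ((h1.sub h2).add_const (γ - 1)).sub h3
    exact this.congr_deriv (by rw [hc]; ring)
  have hcont : ∀ s : Set ℝ, ContinuousOn D s := by
    intro s
    apply ContinuousOn.sub
    · apply ContinuousOn.add
      · apply ContinuousOn.sub
        · exact (continuous_iff_continuousAt.2 fun x =>
            Real.continuousAt_rpow_const x γ (Or.inr hγ0.le)).continuousOn
        · fun_prop
      · fun_prop
    · fun_prop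
  have hD1 : D 1 = 0 := by simp [hD]
  have hanti : AntitoneOn D (Icc 0 1) := by
    apply antitoneOn_of_deriv_nonpos (convex_Icc 0 1) (hcont _)
    · rw [interior_Icc]
      intro x hx
      exact ((hderiv x hx.1.ne').differentiableAt).differentiableWithinAt
    · rw [interior_Icc]
      intro x hx
      rw [(hderiv x hx.1.ne').deriv]
      have := hlow x hx.1.le hx.2.le
      nlinarith
  have hmono : MonotoneOn D (Icc 1 T) := by
    apply monotoneOn_of_deriv_nonneg (convex_Icc 1 T) (hcont _)
    · rw [interior_Icc]
      intro x hx
      exact ((hderiv x (by linarith [hx.1] : x ≠ 0)).differentiableAt).differentiableWithinAt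
    · rw [interior_Icc]
      intro x hx
      rw [(hderiv x (by rintro rfl; exact absurd hx.1 (by norm_num))).deriv]
      have := hhigh x hx.1.le hx.2.le
      nlinarith
  intro t ht0 htT
  have key : 0 ≤ D t := by
    rcases le_total t 1 with h | h
    · have := hanti (show t ∈ Icc 0 1 from ⟨ht0, h⟩) (show (1:ℝ) ∈ Icc 0 1 by norm_num) h
      rw [hD1] at this; linarith
    · have := hmono (show (1:ℝ) ∈ Icc 1 T from ⟨le_refl 1, hT⟩) (show t ∈ Icc 1 T from ⟨h, htT⟩) h
      rw [hD1] at this; linarith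
  simp only [hD] at key
  linarith

lemma core_ineq {γ θ : ℝ} (hγ : 3 / 2 < γ) (hθ0 : 0 < θ) (hθh : θ ≤ 1 / 2) :
    ∃ C₀ > 0, ∀ t : ℝ, 0 ≤ t →
      (t ^ θ - 1) ^ 2 + |t ^ θ - 1| ^ (1 / θ) ≤ C₀ * (t ^ γ - γ * t + (γ - 1)) := by
  have hγ1 : (1:ℝ) < γ := by linarith
  set T : ℝ := max 4 ((2 * γ) ^ (γ - 1)⁻¹) with hTdef
  have hT4 : (4:ℝ) ≤ T := le_max_left _ _
  have hT1 : (1:ℝ) ≤ T := by linarith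
  have hT0 : (0:ℝ) < T := by linarith
  have hTpow : 2 * γ ≤ T ^ (γ - 1) := by
    calc 2 * γ = ((2 * γ) ^ (γ - 1)⁻¹) ^ (γ - 1) :=
          (Real.rpow_inv_rpow (by linarith) (by intro h; exact absurd h (by intro h'; linarith [sub_eq_zero.mp h']))).symm
      _ ≤ T ^ (γ - 1) := Real.rpow_le_rpow (Real.rpow_nonneg (by linarith) _)
          (le_max_right _ _) (by linarith)
  set κ : ℝ := min 1 (γ - 1) * min 1 (T ^ (γ - 2)) with hκdef
  have hκ0 : 0 < κ := by
    apply mul_pos (lt_min one_pos (by linarith))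
      (lt_min one_pos (Real.rpow_pos_of_pos hT0 _))
  have hquad := bregman_quad hγ1 hκ0 hT1
    (fun t ht0 ht1 => by
      have := slope_low (α := γ - 1) (T := T) (by linarith) hT1 ht0 ht1
      convert this using 3 <;> ring_nf)
    (fun t ht1 htT => by
      have := slope_high (α := γ - 1) (T := T) (by linarith) hT1 ht1 htT
      convert this using 3 <;> ring_nf)
  set c : ℝ := γ * κ / 2 with hcdef
  have hc0 : 0 < c := by positivity
  clear_value T κ c
  refine ⟨max 2 ((1 + T) / c), lt_of_lt_of_le (by norm_num) (le_max_left _ _), ?_⟩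
  intro t ht0
  set x : ℝ := t ^ θ - 1 with hxdef
  set P : ℝ := t ^ γ - γ * t + (γ - 1) with hPdef
  clear_value x P
  rcases le_total t T with htT | htT
  · -- small region
    have hquadt := hquad t ht0 htT
    rw [← hPdef] at hquadt
    have hPnn : 0 ≤ P := le_trans (by positivity) hquadt
    have habs : |x| ≤ |t - 1| := by
      rw [hxdef]; exact abs_rpow_sub_one_le ht0 hθ0 (by linarith)
    have h1 : x ^ 2 ≤ (t - 1) ^ 2 := by
      rw [← sq_abs x, ← sq_abs (t - 1)]
      exact pow_le_pow_left₀ (abs_nonneg _) habs 2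
    have hxb : |x| ≤ T ^ θ := by
      have htθ : t ^ θ ≤ T ^ θ := Real.rpow_le_rpow ht0 htT hθ0.le
      have h1T : (1:ℝ) ≤ T ^ θ := Real.one_le_rpow hT1 hθ0.le
      have htθ0 : 0 ≤ t ^ θ := Real.rpow_nonneg ht0 _
      rw [abs_le]
      constructor <;> [linarith; linarith]
    have h2 : |x| ^ (1 / θ) ≤ T * (t - 1) ^ 2 := by
      rcases eq_or_ne x 0 with hx0 | hx0
      · rw [hx0]
        simp only [abs_zero]
        rw [Real.zero_rpow (by positivity : (1:ℝ)/θ ≠ 0)]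
        positivity
      · have hax : 0 < |x| := abs_pos.2 hx0
        have hsplit : |x| ^ (1 / θ) = |x| ^ (2:ℝ) * |x| ^ (1 / θ - 2) := by
          rw [← Real.rpow_add hax]
          congr 1
          ring
        have h2θ : 0 ≤ 1 / θ - 2 := by
          rw [sub_nonneg, le_div_iff₀ hθ0]
          linarith
        have hfac : |x| ^ (1 / θ - 2) ≤ T := by
          calc |x| ^ (1 / θ - 2) ≤ (T ^ θ) ^ (1 / θ - 2) :=
                Real.rpow_le_rpow (abs_nonneg _) hxb h2θ
            _ = T ^ (θ * (1 / θ - 2)) := (Real.rpow_mul hT0.le _ _).symm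
            _ = T ^ (1 - 2 * θ) := by
                congr 1
                rw [mul_sub, mul_one_div, div_self hθ0.ne']
                ring
            _ ≤ T ^ (1:ℝ) := Real.rpow_le_rpow_of_exponent_le hT1 (by linarith)
            _ = T := Real.rpow_one T
        have hsq : |x| ^ (2:ℝ) = x ^ 2 := by
          rw [show (2:ℝ) = ((2:ℕ):ℝ) by norm_num, Real.rpow_natCast, sq_abs]
        calc |x| ^ (1 / θ) = x ^ 2 * |x| ^ (1 / θ - 2) := by rw [hsplit, hsq]
          _ ≤ x ^ 2 * T := by
              apply mul_le_mul_of_nonneg_left hfac (by positivity)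
          _ ≤ (t - 1) ^ 2 * T := by
              apply mul_le_mul_of_nonneg_right h1 hT0.le
          _ = T * (t - 1) ^ 2 := by ring
    have hchain : x ^ 2 + |x| ^ (1 / θ) ≤ (1 + T) * (t - 1) ^ 2 := by
      have hexp2 : (1 + T) * (t - 1) ^ 2 = (t - 1) ^ 2 + T * (t - 1) ^ 2 := by ring
      linarith
    have hfinal : (1 + T) * (t - 1) ^ 2 ≤ ((1 + T) / c) * P := by
      rw [div_mul_eq_mul_div, le_div_iff₀ hc0]
      nlinarith
    calc x ^ 2 + |x| ^ (1 / θ) ≤ ((1 + T) / c) * P := le_trans hchain hfinal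
      _ ≤ max 2 ((1 + T) / c) * P := mul_le_mul_of_nonneg_right (le_max_right _ _) hPnn
  · -- large region
    have ht1 : (1:ℝ) ≤ t := by linarith
    have htpos : (0:ℝ) < t := by linarith
    have hpow : 2 * γ ≤ t ^ (γ - 1) :=
      le_trans hTpow (Real.rpow_le_rpow hT0.le htT (by linarith))
    have hts : t ^ (γ - 1) * t = t ^ γ := by
      have h := Real.rpow_add htpos (γ - 1) 1
      rw [Real.rpow_one] at h
      rw [← h]; norm_num
    have hP : γ * t ≤ P := by
      have : 2 * γ * t ≤ t ^ (γ - 1) * t := mul_le_mul_of_nonneg_right hpow htpos.le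
      rw [hts] at this
      rw [hPdef]
      nlinarith
    have hPnn : 0 ≤ P := le_trans (by positivity) hP
    have hxnn : 0 ≤ x := by
      simp only [hxdef, sub_nonneg]
      exact Real.one_le_rpow ht1 hθ0.le
    have htθ : t ^ θ ≤ t ^ (1:ℝ) := Real.rpow_le_rpow_of_exponent_le ht1 (by linarith)
    rw [Real.rpow_one] at htθ
    have htθ0 : 0 ≤ t ^ θ := Real.rpow_nonneg ht0 _
    have h1 : x ^ 2 ≤ t := by
      have hsq : x ^ 2 ≤ (t ^ θ) ^ 2 := by nlinarith
      have : (t ^ θ) ^ 2 = t ^ (θ * 2) := by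
        rw [← Real.rpow_natCast (t ^ θ) 2, ← Real.rpow_mul ht0]
        norm_num
      rw [this] at hsq
      calc x ^ 2 ≤ t ^ (θ * 2) := hsq
        _ ≤ t ^ (1:ℝ) := Real.rpow_le_rpow_of_exponent_le ht1 (by linarith)
        _ = t := Real.rpow_one t
    have h2 : |x| ^ (1 / θ) ≤ t := by
      rw [abs_of_nonneg hxnn]
      calc x ^ (1 / θ) ≤ (t ^ θ) ^ (1 / θ) :=
            Real.rpow_le_rpow hxnn (by rw [hxdef]; linarith) (by positivity)
        _ = t ^ (θ * (1 / θ)) := (Real.rpow_mul ht0 _ _).symm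
        _ = t ^ (1:ℝ) := by rw [mul_one_div, div_self hθ0.ne']
        _ = t := Real.rpow_one t
    have hsum : x ^ 2 + |x| ^ (1 / θ) ≤ 2 * t := by linarith
    have h2t : 2 * t ≤ 2 * P := by
      have hγt : t ≤ γ * t := by nlinarith [mul_nonneg (by linarith : (0:ℝ) ≤ γ - 1) htpos.le]
      linarith
    calc x ^ 2 + |x| ^ (1 / θ) ≤ 2 * P := le_trans hsum h2t
      _ ≤ max 2 ((1 + T) / c) * P := mul_le_mul_of_nonneg_right (le_max_left _ _) hPnn

theorem sq_add_rpow_le_Gpot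
    (γ θ m M : ℝ) (hγ : 3 / 2 < γ)
    (hθ : θ = min ((2 / 3) * γ - 1) (min (1 / 2) (γ / 6)))
    (hm : 0 < m) (hmM : m ≤ M) :
    ∃ C > 0, ∀ ρs : ℝ, m ≤ ρs → ρs ≤ M → ∀ ρ : ℝ, 0 ≤ ρ →
      (ρ ^ θ - ρs ^ θ) ^ 2 + |ρ ^ θ - ρs ^ θ| ^ (1 / θ) ≤ C * Gpot γ ρ ρs := by
  have hγ1 : (1:ℝ) < γ := by linarith
  have hθ0 : 0 < θ := by
    rw [hθ]
    exact lt_min (by linarith) (lt_min (by norm_num) (by linarith))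
  have hθh : θ ≤ 1 / 2 := by
    rw [hθ]
    exact le_trans (min_le_right _ _) (min_le_left _ _)
  obtain ⟨C₀, hC₀, hcore⟩ := core_ineq hγ hθ0 hθh
  set B : ℝ := (max 1 M) ^ 2 with hBdef
  have hmax1 : (1:ℝ) ≤ max 1 M := le_max_left _ _
  have hB1 : 1 ≤ B := by nlinarith
  have hBM : M ≤ B := by nlinarith [le_max_right 1 M]
  set b : ℝ := (min 1 m) ^ γ with hbdef
  have hb0 : 0 < b := Real.rpow_pos_of_pos (lt_min one_pos hm) _
  have hB0 : (0:ℝ) < B := by nlinarith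
  refine ⟨B * C₀ * (γ - 1) / b,
    div_pos (mul_pos (mul_pos hB0 hC₀) (by linarith)) hb0, ?_⟩
  intro ρs hρsm hρsM ρ hρ
  have hρs0 : 0 < ρs := lt_of_lt_of_le hm hρsm
  set t : ℝ := ρ / ρs with htdef
  have ht0 : 0 ≤ t := by positivity
  have hρeq : ρ = t * ρs := by rw [htdef]; field_simp
  have hrθ : ρ ^ θ = t ^ θ * ρs ^ θ := by rw [hρeq, Real.mul_rpow ht0 hρs0.le]
  have hrγ : ρ ^ γ = t ^ γ * ρs ^ γ := by rw [hρeq, Real.mul_rpow ht0 hρs0.le]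
  have hρsγ : ρs * ρs ^ (γ - 1) = ρs ^ γ := by
    have h := Real.rpow_add hρs0 1 (γ - 1)
    rw [Real.rpow_one] at h
    rw [← h]; norm_num
  have hcross : ρ * ρs ^ (γ - 1) = t * ρs ^ γ := by
    rw [hρeq, mul_assoc, hρsγ]
  have hG : Gpot γ ρ ρs = ρs ^ γ * ((t ^ γ - γ * t + (γ - 1)) / (γ - 1)) := by
    rw [Gpot, hrγ, mul_assoc (γ / (γ - 1)) ρ, hcross]
    have hne : γ - 1 ≠ 0 := by linarith
    field_simp
  have hdiff : ρ ^ θ - ρs ^ θ = (t ^ θ - 1) * ρs ^ θ := by rw [hrθ]; ring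
  have hρθ0 : (0:ℝ) ≤ ρs ^ θ := Real.rpow_nonneg hρs0.le _
  have habs2 : |ρ ^ θ - ρs ^ θ| ^ (1 / θ) = |t ^ θ - 1| ^ (1 / θ) * ρs := by
    rw [hdiff, abs_mul, abs_of_nonneg hρθ0,
      Real.mul_rpow (abs_nonneg _) hρθ0, ← Real.rpow_mul hρs0.le,
      mul_one_div, div_self hθ0.ne', Real.rpow_one]
  have hsq2 : (ρ ^ θ - ρs ^ θ) ^ 2 = (t ^ θ - 1) ^ 2 * (ρs ^ θ) ^ 2 := by
    rw [hdiff, mul_pow]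
  have hρθB : (ρs ^ θ) ^ 2 ≤ B := by
    have hle : ρs ^ θ ≤ max 1 M := by
      rcases le_total ρs 1 with h | h
      · exact le_trans (Real.rpow_le_one hρs0.le h hθ0.le) hmax1
      · calc ρs ^ θ ≤ ρs ^ (1:ℝ) := Real.rpow_le_rpow_of_exponent_le h (by linarith)
          _ = ρs := Real.rpow_one ρs
          _ ≤ M := hρsM
          _ ≤ max 1 M := le_max_right _ _
    rw [hBdef]
    exact pow_le_pow_left₀ hρθ0 hle 2
  have hcoret := hcore t ht0
  set P : ℝ := t ^ γ - γ * t + (γ - 1) with hPdef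
  clear_value P
  have hPnn : 0 ≤ P := by
    have h0 : (0:ℝ) ≤ C₀ * P := le_trans (by positivity) hcoret
    nlinarith
  have hbγ : b ≤ ρs ^ γ := by
    rw [hbdef]
    exact Real.rpow_le_rpow (le_min zero_le_one hm.le)
      (le_trans (min_le_right _ _) hρsm) (by linarith)
  have hT1 : (t ^ θ - 1) ^ 2 * (ρs ^ θ) ^ 2 ≤ (t ^ θ - 1) ^ 2 * B :=
    mul_le_mul_of_nonneg_left hρθB (by positivity)
  have hT2 : |t ^ θ - 1| ^ (1 / θ) * ρs ≤ |t ^ θ - 1| ^ (1 / θ) * B :=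
    mul_le_mul_of_nonneg_left (le_trans hρsM hBM) (by positivity)
  have hsum : (ρ ^ θ - ρs ^ θ) ^ 2 + |ρ ^ θ - ρs ^ θ| ^ (1 / θ) ≤ B * C₀ * P := by
    rw [hsq2, habs2]
    calc (t ^ θ - 1) ^ 2 * (ρs ^ θ) ^ 2 + |t ^ θ - 1| ^ (1 / θ) * ρs
        ≤ (t ^ θ - 1) ^ 2 * B + |t ^ θ - 1| ^ (1 / θ) * B := add_le_add hT1 hT2
      _ = B * ((t ^ θ - 1) ^ 2 + |t ^ θ - 1| ^ (1 / θ)) := by ring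
      _ ≤ B * (C₀ * P) := mul_le_mul_of_nonneg_left hcoret (by positivity)
      _ = B * C₀ * P := by ring
  have hRHS : B * C₀ * P ≤ B * C₀ * (γ - 1) / b * Gpot γ ρ ρs := by
    rw [hG]
    have hne : γ - 1 ≠ 0 := by linarith
    have key : B * C₀ * (γ - 1) / b * (ρs ^ γ * (P / (γ - 1))) = B * C₀ / b * (ρs ^ γ * P) := by
      field_simp
    rw [key]
    have h1 : b * P ≤ ρs ^ γ * P := mul_le_mul_of_nonneg_right hbγ hPnn
    have h2 : B * C₀ / b * (b * P) ≤ B * C₀ / b * (ρs ^ γ * P) :=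
      mul_le_mul_of_nonneg_left h1 (by positivity)
    have h3 : B * C₀ / b * (b * P) = B * C₀ * P := by
      field_simp
    linarith
  exact le_trans hsum hRHS
end

section
/- Let Ω ⊂ ℝ³ be a measurable set of finite Lebesgue measure, let γ > 3/2, and set θ := min{(2/3)γ − 1, 1/2, γ/6}. Let 0 < m ≤ M, let ρ : Ω → ℝ be measurable with ρ ≥ 0 and ρ^γ integrable over Ω, let ρ_s : Ω → ℝ be measurable with m ≤ ρ_s ≤ M on Ω, and assume ∫_Ω ρ dx = ∫_Ω ρ_s dx. Then there exists a constant C > 0, depending only on γ, m and M, such that | ∫_Ω ρ_s^{1−θ} (ρ^θ − ρ_s^θ) dx | ≤ C ∫_Ω G(ρ, ρ_s) dx. -/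
open MeasureTheory Real

/-- nonnegativity of the Young defect ψ(t) = (1/γ) t^γ + (1 - 1/γ) - t. -/
lemma psi_nonneg {γ t : ℝ} (hγ : 1 < γ) (ht : 0 ≤ t) :
    0 ≤ 1 / γ * t ^ γ + (1 - 1 / γ) - t := by
  have hγ0 : (0:ℝ) < γ := by linarith
  have h := Real.geom_mean_le_arith_mean2_weighted (w₁ := 1/γ) (w₂ := 1 - 1/γ)
      (p₁ := t ^ γ) (p₂ := 1) (by positivity)
      (by rw [sub_nonneg]; rw [div_le_one hγ0]; linarith)
      (by positivity) zero_le_one (by ring)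
  have h2 : (t ^ γ) ^ (1/γ) = t := by
    rw [← Real.rpow_mul ht, mul_one_div, div_self (ne_of_gt hγ0), Real.rpow_one]
  rw [Real.one_rpow, mul_one, h2] at h
  linarith

/-- key pointwise inequality -/
lemma phi_le {γ θ t : ℝ} (hγ : 1 < γ) (hθ0 : 0 < θ) (hθ1 : θ < 1) (ht : 0 ≤ t) :
    θ * t + (1 - θ) - t ^ θ ≤ γ / (γ - 1) * (1 / γ * t ^ γ + (1 - 1 / γ) - t) := by
  have hγ0 : (0:ℝ) < γ := by linarith
  have hγ1 : (0:ℝ) < γ - 1 := by linarith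
  have hγθ : (0:ℝ) < γ - θ := by linarith
  rcases eq_or_lt_of_le ht with h0 | htpos
  · rw [← h0]
    rw [Real.zero_rpow (ne_of_gt hθ0), Real.zero_rpow (ne_of_gt hγ0)]
    have : γ / (γ - 1) * (1 / γ * 0 + (1 - 1 / γ) - 0) = 1 := by
      field_simp
      ring
    rw [this]; linarith
  · set μ : ℝ := (γ - 1) / (γ - θ) with hμdef
    have hμ0 : 0 < μ := by positivity
    have hμ1 : μ ≤ 1 := by
      rw [hμdef, div_le_one hγθ]; linarith
    have hb : t ≤ μ * t ^ θ + (1 - μ) * t ^ γ := by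
      have h := Real.geom_mean_le_arith_mean2_weighted (w₁ := μ) (w₂ := 1 - μ)
        (p₁ := t ^ θ) (p₂ := t ^ γ) hμ0.le (by linarith)
        (Real.rpow_nonneg ht _) (Real.rpow_nonneg ht _) (by ring)
      have h2 : (t ^ θ) ^ μ * (t ^ γ) ^ (1 - μ) = t := by
        rw [← Real.rpow_mul ht, ← Real.rpow_mul ht, ← Real.rpow_add htpos]
        rw [show θ * μ + γ * (1 - μ) = 1 by rw [hμdef]; field_simp; ring]
        exact Real.rpow_one t
      rw [h2] at h; exact h
    have ha : 0 ≤ 1 / γ * t ^ γ + (1 - 1 / γ) - t := psi_nonneg hγ ht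
    rw [div_mul_eq_mul_div, le_div_iff₀ hγ1]
    have hP : γ * (1 / γ * t ^ γ + (1 - 1 / γ) - t) = t ^ γ + γ - 1 - γ * t := by
      field_simp; ring
    have ha' : γ * t ≤ t ^ γ + γ - 1 := by
      have := mul_le_mul_of_nonneg_left ha hγ0.le
      rw [mul_zero] at this; linarith [hP ▸ this]
    have hb' : (γ - θ) * t ≤ (γ - 1) * t ^ θ + (1 - θ) * t ^ γ := by
      have := mul_le_mul_of_nonneg_left hb hγθ.le
      calc (γ - θ) * t ≤ (γ - θ) * (μ * t ^ θ + (1 - μ) * t ^ γ) := this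
        _ = (γ - 1) * t ^ θ + (1 - θ) * t ^ γ := by
            rw [hμdef]; field_simp; ring
    nlinarith [mul_le_mul_of_nonneg_left ha' hθ0.le]

/-- the pointwise bound against the relative pressure potential -/
lemma pointwise_bound {γ θ m M r s : ℝ} (hγ : 1 < γ) (hθ0 : 0 < θ) (hθ1 : θ < 1)
    (hm : 0 < m) (hr : 0 ≤ r) (hms : m ≤ s) (hsM : s ≤ M) :
    0 ≤ Gpot γ r s ∧
      |s ^ (1 - θ) * (r ^ θ - s ^ θ) - θ * (r - s)| ≤ m ^ (1 - γ) * Gpot γ r s := by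
  have hs : 0 < s := lt_of_lt_of_le hm hms
  have hγ1 : (0:ℝ) < γ - 1 := by linarith
  set t := r / s with htdef
  have ht : 0 ≤ t := div_nonneg hr hs.le
  have hsγ : (0:ℝ) < s ^ γ := Real.rpow_pos_of_pos hs γ
  have hγ0 : (0:ℝ) < γ := by linarith
  have hGrep : Gpot γ r s = s ^ γ * (γ / (γ - 1) * (1 / γ * t ^ γ + (1 - 1 / γ) - t)) := by
    have h1 : t ^ γ = r ^ γ / s ^ γ := Real.div_rpow hr hs.le γ
    have h2 : s ^ (γ - 1) = s ^ γ / s := Real.rpow_sub_one (ne_of_gt hs) γ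
    have hsne : s ≠ 0 := ne_of_gt hs
    have hsγne : s ^ γ ≠ 0 := ne_of_gt hsγ
    have e1 : s ^ γ * t ^ γ = r ^ γ := by
      rw [h1, mul_comm, div_mul_cancel₀ _ hsγne]
    have e2 : s ^ γ * t = r * s ^ (γ - 1) := by rw [htdef, h2]; ring
    have e3 : s ^ γ * (γ / (γ - 1) * (1 / γ * t ^ γ + (1 - 1 / γ) - t))
        = γ / (γ - 1) * (1 / γ) * (s ^ γ * t ^ γ) - γ / (γ - 1) * (s ^ γ * t)
          + γ / (γ - 1) * (1 - 1 / γ) * s ^ γ := by ring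
    rw [e3, e1, e2, Gpot]
    field_simp
  have hψ : 0 ≤ 1 / γ * t ^ γ + (1 - 1 / γ) - t := psi_nonneg hγ ht
  have hG0 : 0 ≤ Gpot γ r s := by
    rw [hGrep]
    exact mul_nonneg hsγ.le (mul_nonneg (by positivity) hψ)
  have hFrep : -(s ^ (1 - θ) * (r ^ θ - s ^ θ) - θ * (r - s))
      = s * (θ * t + (1 - θ) - t ^ θ) := by
    have h1 : t ^ θ = r ^ θ / s ^ θ := Real.div_rpow hr hs.le θ
    have h2 : s ^ (1 - θ) = s / s ^ θ := by
      rw [Real.rpow_sub hs, Real.rpow_one]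
    have h3 : (0:ℝ) < s ^ θ := Real.rpow_pos_of_pos hs θ
    have hsne : s ≠ 0 := ne_of_gt hs
    have e1 : s * t ^ θ = s ^ (1 - θ) * r ^ θ := by rw [h1, h2]; ring
    have e2 : s * t = r := by rw [htdef]; field_simp
    have e3 : s ^ (1 - θ) * s ^ θ = s := by
      rw [← Real.rpow_add hs]; norm_num
    have expand : s * (θ * t + (1 - θ) - t ^ θ)
        = θ * (s * t) + (1 - θ) * s - s * t ^ θ := by ring
    rw [expand, e2, e1]
    linear_combination e3
  have hφ0 : 0 ≤ θ * t + (1 - θ) - t ^ θ := by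
    have h := Real.geom_mean_le_arith_mean2_weighted (w₁ := θ) (w₂ := 1 - θ)
      (p₁ := t) (p₂ := 1) hθ0.le (by linarith) ht zero_le_one (by ring)
    rw [Real.one_rpow, mul_one] at h
    linarith
  have hkey : s * (θ * t + (1 - θ) - t ^ θ) ≤ m ^ (1 - γ) * Gpot γ r s := by
    have h2 : s * (θ * t + (1 - θ) - t ^ θ)
        ≤ s * (γ / (γ - 1) * (1 / γ * t ^ γ + (1 - 1 / γ) - t)) :=
      mul_le_mul_of_nonneg_left (phi_le hγ hθ0 hθ1 ht) hs.le
    have h3 : s ^ (1 - γ) * Gpot γ r s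
        = s * (γ / (γ - 1) * (1 / γ * t ^ γ + (1 - 1 / γ) - t)) := by
      have hss : s ^ (1 - γ) * s ^ γ = s := by
        rw [← Real.rpow_add hs]; norm_num
      rw [hGrep, ← mul_assoc, hss]
    have h4 : s ^ (1 - γ) ≤ m ^ (1 - γ) :=
      Real.rpow_le_rpow_of_nonpos hm hms (by linarith)
    calc s * (θ * t + (1 - θ) - t ^ θ)
        ≤ s ^ (1 - γ) * Gpot γ r s := by rw [h3]; exact h2
      _ ≤ m ^ (1 - γ) * Gpot γ r s := mul_le_mul_of_nonneg_right h4 hG0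
  refine ⟨hG0, ?_⟩
  have hFle : s ^ (1 - θ) * (r ^ θ - s ^ θ) - θ * (r - s) ≤ 0 := by
    nlinarith [mul_nonneg hs.le hφ0]
  rw [abs_of_nonpos hFle, hFrep]
  exact hkey

theorem abs_integral_weighted_power_diff_le
    (γ θ m M : ℝ) (hγ : 3 / 2 < γ)
    (hθ : θ = min ((2 / 3) * γ - 1) (min (1 / 2) (γ / 6)))
    (hm : 0 < m) (hmM : m ≤ M) :
    ∃ C > 0, ∀ (Ω : Set (Fin 3 → ℝ)) (ρ ρs : (Fin 3 → ℝ) → ℝ),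
      MeasurableSet Ω → volume Ω < ⊤ →
      Measurable ρ → (∀ x ∈ Ω, 0 ≤ ρ x) →
      IntegrableOn (fun x => ρ x ^ γ) Ω volume →
      Measurable ρs → (∀ x ∈ Ω, m ≤ ρs x ∧ ρs x ≤ M) →
      (∫ x in Ω, ρ x) = (∫ x in Ω, ρs x) →
      |∫ x in Ω, ρs x ^ (1 - θ) * (ρ x ^ θ - ρs x ^ θ)| ≤
        C * ∫ x in Ω, Gpot γ (ρ x) (ρs x) := by
  have hγ1 : (1:ℝ) < γ := by linarith
  have hθ0 : 0 < θ := by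
    rw [hθ]
    exact lt_min (by linarith) (lt_min (by norm_num) (by linarith))
  have hθ1 : θ < 1 := by
    rw [hθ]
    calc min ((2/3)*γ - 1) (min (1/2) (γ/6)) ≤ min (1/2 : ℝ) (γ/6) := min_le_right _ _
      _ ≤ 1/2 := min_le_left _ _
      _ < 1 := by norm_num
  refine ⟨m ^ (1 - γ), Real.rpow_pos_of_pos hm _, ?_⟩
  intro Ω ρ ρs hΩ hvol hρm hρ0 hργ hρsm hρsb hmass
  -- integrability facts
  have hconst : ∀ c : ℝ, IntegrableOn (fun _ => c) Ω volume := fun c =>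
    integrableOn_const hvol.ne enorm_ne_top
  have hρ_int : IntegrableOn ρ Ω volume := by
    refine Integrable.mono' ((hconst 1).add hργ) hρm.aestronglyMeasurable ?_
    refine (ae_restrict_iff' hΩ).2 (Filter.Eventually.of_forall fun x hx => ?_)
    rw [Real.norm_eq_abs, abs_of_nonneg (hρ0 x hx)]
    show ρ x ≤ 1 + ρ x ^ γ
    rcases le_or_gt (ρ x) 1 with h | h
    · have : (0:ℝ) ≤ ρ x ^ γ := Real.rpow_nonneg (hρ0 x hx) γ
      linarith
    · have h2 : ρ x ^ (1:ℝ) ≤ ρ x ^ γ :=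
        Real.rpow_le_rpow_of_exponent_le h.le (by linarith)
      rw [Real.rpow_one] at h2
      linarith
  have hρs_int : IntegrableOn ρs Ω volume := by
    refine Integrable.mono' (hconst M) hρsm.aestronglyMeasurable ?_
    refine (ae_restrict_iff' hΩ).2 (Filter.Eventually.of_forall fun x hx => ?_)
    rw [Real.norm_eq_abs, abs_of_nonneg (le_trans hm.le (hρsb x hx).1)]
    exact (hρsb x hx).2
  have hG_int : IntegrableOn (fun x => Gpot γ (ρ x) (ρs x)) Ω volume := by
    have h1 : IntegrableOn (fun x => (1/(γ-1)) * ρ x ^ γ) Ω volume := hργ.const_mul _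
    have h2 : IntegrableOn (fun x => (γ/(γ-1)) * ρ x * ρs x ^ (γ-1)) Ω volume := by
      have hmeas : Measurable (fun x => γ/(γ-1) * ρ x * ρs x ^ (γ-1)) := by
        have : Measurable (fun x => ρs x ^ (γ-1)) := by fun_prop
        exact (measurable_const.mul hρm).mul this
      refine Integrable.mono' ((hρ_int.const_mul (|γ/(γ-1)| * M ^ (γ-1))))
        hmeas.aestronglyMeasurable ?_
      refine (ae_restrict_iff' hΩ).2 (Filter.Eventually.of_forall fun x hx => ?_)
      have hsx : 0 ≤ ρs x := le_trans hm.le (hρsb x hx).1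
      have hb : ρs x ^ (γ-1) ≤ M ^ (γ-1) :=
        Real.rpow_le_rpow hsx (hρsb x hx).2 (by linarith)
      have hb0 : 0 ≤ ρs x ^ (γ-1) := Real.rpow_nonneg hsx _
      rw [Real.norm_eq_abs, abs_mul, abs_mul, abs_of_nonneg hb0,
        abs_of_nonneg (hρ0 x hx)]
      calc |γ/(γ-1)| * ρ x * ρs x ^ (γ-1) ≤ |γ/(γ-1)| * ρ x * M ^ (γ-1) := by
            exact mul_le_mul_of_nonneg_left hb
              (mul_nonneg (abs_nonneg _) (hρ0 x hx))
        _ = |γ/(γ-1)| * M ^ (γ-1) * ρ x := by ring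
    have h3 : IntegrableOn (fun x => ρs x ^ γ) Ω volume := by
      have hmeas : Measurable (fun x => ρs x ^ γ) := by fun_prop
      refine Integrable.mono' (hconst (M ^ γ)) hmeas.aestronglyMeasurable ?_
      refine (ae_restrict_iff' hΩ).2 (Filter.Eventually.of_forall fun x hx => ?_)
      have hsx : 0 ≤ ρs x := le_trans hm.le (hρsb x hx).1
      rw [Real.norm_eq_abs, abs_of_nonneg (Real.rpow_nonneg hsx _)]
      exact Real.rpow_le_rpow hsx (hρsb x hx).2 (by linarith)
    have : (fun x => Gpot γ (ρ x) (ρs x))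
        = fun x => (1/(γ-1)) * ρ x ^ γ - (γ/(γ-1)) * ρ x * ρs x ^ (γ-1) + ρs x ^ γ := by
      funext x; rfl
    rw [this]
    exact (h1.sub h2).add h3
  -- the corrected integrand F
  set F : (Fin 3 → ℝ) → ℝ :=
    fun x => ρs x ^ (1 - θ) * (ρ x ^ θ - ρs x ^ θ) - θ * (ρ x - ρs x) with hFdef
  have hptwise : ∀ x ∈ Ω, |F x| ≤ m ^ (1 - γ) * Gpot γ (ρ x) (ρs x) := fun x hx =>
    (pointwise_bound hγ1 hθ0 hθ1 hm (hρ0 x hx) (hρsb x hx).1 (hρsb x hx).2).2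
  have hF_int : IntegrableOn F Ω volume := by
    refine Integrable.mono' (hG_int.const_mul (m ^ (1-γ))) (by fun_prop) ?_
    refine (ae_restrict_iff' hΩ).2 (Filter.Eventually.of_forall fun x hx => ?_)
    rw [Real.norm_eq_abs]
    exact hptwise x hx
  have hsub : (∫ x in Ω, (ρ x - ρs x)) = 0 := by
    rw [integral_sub hρ_int hρs_int, hmass, sub_self]
  have hsplit : (∫ x in Ω, ρs x ^ (1 - θ) * (ρ x ^ θ - ρs x ^ θ)) = ∫ x in Ω, F x := by
    have heq : (fun x => ρs x ^ (1 - θ) * (ρ x ^ θ - ρs x ^ θ))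
        = fun x => F x + θ * (ρ x - ρs x) := by
      funext x; rw [hFdef]; ring
    have hg : IntegrableOn (fun x => θ * (ρ x - ρs x)) Ω volume :=
      (hρ_int.sub hρs_int).const_mul θ
    rw [heq, integral_add hF_int hg, integral_const_mul, hsub, mul_zero, add_zero]
  rw [hsplit]
  calc |∫ x in Ω, F x| ≤ ∫ x in Ω, |F x| := by
        simpa [Real.norm_eq_abs] using
          norm_integral_le_integral_norm (μ := volume.restrict Ω) F
    _ ≤ ∫ x in Ω, m ^ (1 - γ) * Gpot γ (ρ x) (ρs x) :=
        setIntegral_mono_on hF_int.abs (hG_int.const_mul _) hΩ hptwise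
    _ = m ^ (1 - γ) * ∫ x in Ω, Gpot γ (ρ x) (ρs x) := integral_const_mul _ _
end

section
/- Let Ω ⊂ ℝ³ be a measurable set of finite positive Lebesgue measure, let F : Ω → ℝ be a bounded measurable function with essential infimum i and essential supremum s, and let γ > 1. Define S(k) := ∫_Ω ( ((γ−1)/γ) · max(F(x) − k, 0) )^{1/(γ−1)} dx. If m is a real number with 0 < m ≤ S(i), then there exists k₀ with i ≤ k₀ < s and S(k₀) = m. -/
open MeasureTheory

theorem mass_function_intermediate_value
    (Ω : Set (Fin 3 → ℝ)) (hΩ : MeasurableSet Ω)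
    (hΩpos : 0 < volume Ω) (hΩfin : volume Ω < ⊤)
    (F : (Fin 3 → ℝ) → ℝ) (hF : Measurable F)
    (hFbd : ∃ B : ℝ, ∀ x ∈ Ω, |F x| ≤ B)
    (γ : ℝ) (hγ : 1 < γ)
    (S : ℝ → ℝ)
    (hS : S = fun k => ∫ x in Ω, ((γ - 1) / γ * max (F x - k) 0) ^ (1 / (γ - 1)))
    (i s : ℝ) (hi : i = essInf F (volume.restrict Ω))
    (hs : s = essSup F (volume.restrict Ω))
    (m : ℝ) (hm : 0 < m) (hmS : m ≤ S i) :
    ∃ k₀ : ℝ, i ≤ k₀ ∧ k₀ < s ∧ S k₀ = m := by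
  set μ := volume.restrict Ω with hμ
  obtain ⟨B, hB⟩ := hFbd
  have hp : (0:ℝ) < 1 / (γ - 1) := by apply div_pos one_pos; linarith
  have hc : (0:ℝ) < (γ - 1) / γ := by apply div_pos <;> linarith
  have hBae : ∀ᵐ x ∂μ, |F x| ≤ B := (ae_restrict_iff' hΩ).2 (ae_of_all _ hB)
  have hbdd_above : Filter.IsBoundedUnder (· ≤ ·) (ae μ) F :=
    ⟨B, hBae.mono fun x hx => (abs_le.1 hx).2⟩
  have hbdd_below : Filter.IsBoundedUnder (· ≥ ·) (ae μ) F :=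
    ⟨-B, hBae.mono fun x hx => (abs_le.1 hx).1⟩
  have hles : ∀ᵐ x ∂μ, F x ≤ s := by rw [hs]; exact ae_le_essSup hbdd_above
  have hige : ∀ᵐ x ∂μ, i ≤ F x := by rw [hi]; exact ae_essInf_le hbdd_below
  have hμne : μ ≠ 0 := by
    intro h
    have := Measure.restrict_apply_univ (μ := volume) Ω
    rw [← hμ, h] at this
    simp at this
    exact hΩpos.ne' this.symm
  haveI : Filter.NeBot (ae μ) := ae_neBot.2 hμne
  have his : i ≤ s := by
    obtain ⟨x, h1, h2⟩ := (hige.and hles).exists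
    exact h1.trans h2
  haveI : Fact (volume Ω < ⊤) := ⟨hΩfin⟩
  -- S s = 0
  have hSs : S s = 0 := by
    rw [hS]
    have : ∀ᵐ x ∂μ, ((γ - 1) / γ * max (F x - s) 0) ^ (1 / (γ - 1)) = 0 := by
      filter_upwards [hles] with x hx
      rw [max_eq_right (by linarith), mul_zero, Real.zero_rpow hp.ne']
    calc ∫ x in Ω, ((γ - 1) / γ * max (F x - s) 0) ^ (1 / (γ - 1))
        = ∫ _x in Ω, (0:ℝ) := integral_congr_ae this
      _ = 0 := integral_zero _ _
  -- continuity of S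
  have hmeas : ∀ k : ℝ, AEStronglyMeasurable
      (fun x => ((γ - 1) / γ * max (F x - k) 0) ^ (1 / (γ - 1))) μ := by
    intro k
    exact ((Real.continuous_rpow_const hp.le).measurable.comp
      (((hF.sub_const k).max measurable_const).const_mul _)).aestronglyMeasurable
  have hScont : Continuous S := by
    rw [hS]
    rw [continuous_iff_continuousAt]
    intro k₀
    apply continuousAt_of_dominated (bound := fun _ =>
        ((γ - 1) / γ * (B + |k₀| + 1)) ^ (1 / (γ - 1)))
    · exact Filter.Eventually.of_forall fun k => hmeas k
    · have : ∀ᶠ k in nhds k₀, |k - k₀| ≤ 1 := by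
        have : ∀ᶠ k in nhds k₀, k ∈ Metric.closedBall k₀ 1 :=
          Metric.closedBall_mem_nhds k₀ one_pos
        filter_upwards [this] with k hk
        simpa [Real.dist_eq] using hk
      filter_upwards [this] with k hk
      filter_upwards [hBae] with x hx
      have h1 : (0:ℝ) ≤ (γ - 1) / γ * max (F x - k) 0 := by positivity
      rw [Real.norm_eq_abs, abs_of_nonneg (Real.rpow_nonneg h1 _)]
      apply Real.rpow_le_rpow h1 _ hp.le
      apply mul_le_mul_of_nonneg_left _ hc.le
      have hk' : |k| ≤ |k₀| + 1 := by
        calc |k| = |k₀ + (k - k₀)| := by ring_nf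
          _ ≤ |k₀| + |k - k₀| := abs_add_le _ _
          _ ≤ |k₀| + 1 := by linarith
      have : F x - k ≤ B + |k₀| + 1 := by
        have := (abs_le.1 hx).2
        have := (abs_le.1 hk').1
        have := neg_abs_le k
        linarith [neg_abs_le k, (abs_le.1 hk').1]
      exact max_le (by linarith) (by linarith [abs_nonneg (F x), abs_nonneg k₀])
    · exact integrable_const _
    · apply ae_of_all
      intro x
      apply Continuous.continuousAt
      exact (Real.continuous_rpow_const hp.le).comp
        (continuous_const.mul ((continuous_const.sub continuous_id).max continuous_const))
  -- IVT
  have hivt := intermediate_value_Icc' his hScont.continuousOn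
  have hmmem : m ∈ Set.Icc (S s) (S i) := ⟨hSs ▸ hm.le, hmS⟩
  obtain ⟨k₀, hk₀mem, hk₀⟩ := hivt hmmem
  refine ⟨k₀, hk₀mem.1, ?_, hk₀⟩
  rcases lt_or_eq_of_le hk₀mem.2 with h | h
  · exact h
  · exfalso; rw [h, hSs] at hk₀; linarith
end

section
/- Let T₀ ≥ 0 and C₁ > 0 be real numbers, and let V : ℝ → ℝ be locally integrable on (T₀, ∞). Suppose that for every smooth function φ : ℝ → ℝ with compact support contained in (T₀, ∞) and φ ≥ 0 one has −∫ φ'(t) V(t) dt + C₁ ∫ φ(t) V(t) dt ≤ 0. Then there exists a Lebesgue-null set N ⊆ (T₀, ∞) such that for all s, t ∉ N with T₀ < s < t one has V(t) ≤ V(s) e^{−C₁ (t − s)}. -/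
open MeasureTheory Filter Metric Function Set
open scoped Convolution Topology

theorem distributional_gronwall_exponential_decay
    (T₀ C₁ : ℝ) (hT₀ : 0 ≤ T₀) (hC₁ : 0 < C₁)
    (V : ℝ → ℝ) (hV : LocallyIntegrableOn V (Set.Ioi T₀) volume)
    (hineq : ∀ φ : ℝ → ℝ, ContDiff ℝ (⊤ : ℕ∞) φ → HasCompactSupport φ →
      tsupport φ ⊆ Set.Ioi T₀ → (∀ t, 0 ≤ φ t) →
      (-∫ t, deriv φ t * V t) + C₁ * ∫ t, φ t * V t ≤ 0) :
    ∃ N : Set ℝ, N ⊆ Set.Ioi T₀ ∧ volume N = 0 ∧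
      ∀ s t : ℝ, s ∉ N → t ∉ N → T₀ < s → s < t →
        V t ≤ V s * Real.exp (-C₁ * (t - s)) := by
  classical
  set e : ℝ → ℝ := fun x => Real.exp (C₁ * x) with he_def
  set W : ℝ → ℝ := fun x => e x * V x with hW_def
  have he_cd : ContDiff ℝ (⊤ : ℕ∞) e := Real.contDiff_exp.comp (contDiff_const.mul contDiff_id)
  have he_pos : ∀ x, 0 < e x := fun x => Real.exp_pos _
  have hconte : Continuous e := he_cd.continuous
  -- Integrability of f * V for continuous f with compact support in (T₀, ∞)
  have hInt : ∀ f : ℝ → ℝ, Continuous f → HasCompactSupport f → tsupport f ⊆ Set.Ioi T₀ →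
      Integrable (fun x => f x * V x) := by
    intro f hf hfc hfs
    have hK : IsCompact (tsupport f) := hfc
    have hVK : IntegrableOn V (tsupport f) volume := hV.integrableOn_compact_subset hfs hK
    have h1 : IntegrableOn (fun x => f x * V x) (tsupport f) volume :=
      IntegrableOn.continuousOn_mul hf.continuousOn hVK hK
    have h2 : (fun x => f x * V x) = (tsupport f).indicator (fun x => f x * V x) := by
      symm
      apply Set.indicator_eq_self.2
      intro x hx
      simp only [Function.mem_support] at hx
      exact subset_tsupport f (fun h => hx (by simp [h]))
    rw [h2]
    exact h1.integrable_indicator (isClosed_tsupport f).measurableSet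
  -- Step 1: distributional monotonicity of W
  have key : ∀ ψ : ℝ → ℝ, ContDiff ℝ (⊤ : ℕ∞) ψ → HasCompactSupport ψ →
      tsupport ψ ⊆ Set.Ioi T₀ → (∀ x, 0 ≤ ψ x) → 0 ≤ ∫ x, deriv ψ x * W x := by
    intro ψ hcd hcs hts h0
    set φ : ℝ → ℝ := fun x => ψ x * e x with hφ_def
    have hφcd : ContDiff ℝ (⊤ : ℕ∞) φ := hcd.mul he_cd
    have hφcs : HasCompactSupport φ := hcs.mul_right
    have hφts : tsupport φ ⊆ Set.Ioi T₀ := by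
      refine (closure_minimal ?_ (isClosed_tsupport ψ)).trans hts
      intro x hx
      simp only [Function.mem_support, hφ_def] at hx
      exact subset_tsupport ψ (fun h => hx (by simp [h]))
    have hφ0 : ∀ x, 0 ≤ φ x := fun x => mul_nonneg (h0 x) (he_pos x).le
    have hψdiff : Differentiable ℝ ψ := hcd.differentiable (by simp)
    have hederiv : ∀ x, HasDerivAt e (C₁ * e x) x := by
      intro x
      have h1 : HasDerivAt (fun y : ℝ => C₁ * y) C₁ x := by
        simpa using (hasDerivAt_id x).const_mul C₁
      simpa [he_def, mul_comm] using h1.exp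
    have hφderiv : ∀ x, deriv φ x = deriv ψ x * e x + ψ x * (C₁ * e x) := fun x =>
      (((hψdiff x).hasDerivAt).mul (hederiv x)).deriv
    have hcontd : Continuous (deriv ψ) := hcd.continuous_deriv (mod_cast le_top)
    have I1 : Integrable (fun x => (deriv ψ x * e x) * V x) := by
      apply hInt _ (hcontd.mul hconte) (hcs.deriv.mul_right)
      refine (closure_minimal ?_ (isClosed_tsupport ψ)).trans hts
      intro x hx
      simp only [Function.mem_support] at hx
      exact support_deriv_subset (f := ψ) (fun h => hx (by simp [h]))
    have I2 : Integrable (fun x => (ψ x * e x) * V x) := hInt φ hφcd.continuous hφcs hφts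
    have hiq := hineq φ hφcd hφcs hφts hφ0
    have hB : (∫ x, φ x * V x) = ∫ x, (ψ x * e x) * V x := rfl
    have hsplit : (∫ x, deriv φ x * V x)
        = (∫ x, (deriv ψ x * e x) * V x) + C₁ * ∫ x, (ψ x * e x) * V x := by
      have hfn : (fun x => deriv φ x * V x)
          = fun x => (deriv ψ x * e x) * V x + C₁ * ((ψ x * e x) * V x) := by
        funext x; rw [hφderiv x]; ring
      rw [hfn, integral_add I1 (I2.const_mul C₁), integral_const_mul]
    rw [hsplit, hB] at hiq
    have h3 : 0 ≤ ∫ x, (deriv ψ x * e x) * V x := by linarith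
    simpa only [hW_def, mul_assoc] using h3
  -- Bump family
  let Φ : ℕ → ContDiffBump (0 : ℝ) := fun n =>
    { rIn := 1 / (2 * ((n : ℝ) + 1))
      rOut := 1 / ((n : ℝ) + 1)
      rIn_pos := by positivity
      rIn_lt_rOut := by
        rw [div_lt_div_iff₀ (by positivity) (by positivity)]
        nlinarith [Nat.cast_nonneg (α := ℝ) n] }
  have hΦout : Tendsto (fun n => (Φ n).rOut) atTop (𝓝 0) :=
    tendsto_one_div_add_atTop_nhds_zero_nat
  have hΦK : ∀ n, (Φ n).rOut ≤ 2 * (Φ n).rIn := by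
    intro n
    show (1 : ℝ) / ((n : ℝ) + 1) ≤ 2 * (1 / (2 * ((n : ℝ) + 1)))
    have hn0 : ((n:ℝ) + 1) ≠ 0 := by positivity
    rw [mul_one_div]
    apply le_of_eq
    field_simp
  -- local integrability of W
  have hWloc : LocallyIntegrableOn W (Set.Ioi T₀) volume :=
    hV.continuousOn_mul hconte.continuousOn isOpen_Ioi.isLocallyClosed
  set a : ℕ → ℝ := fun m => T₀ + 1 / ((m : ℝ) + 1) with ha_def
  have ha : ∀ m, T₀ < a m := by
    intro m
    have : (0:ℝ) < 1 / ((m : ℝ) + 1) := by positivity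
    simp only [ha_def]; linarith
  set Wm : ℕ → ℝ → ℝ := fun m => (Set.Ioi (a m)).indicator W with hWm_def
  have hWm : ∀ m, LocallyIntegrable (Wm m) volume := by
    intro m
    rw [locallyIntegrable_iff]
    intro k hk
    have h1 : IntegrableOn W (k ∩ Set.Ici (a m)) volume :=
      hWloc.integrableOn_compact_subset
        (fun x hx => lt_of_lt_of_le (ha m) hx.2) (hk.inter_right isClosed_Ici)
    have h2 : IntegrableOn W (Set.Ioi (a m) ∩ k) volume :=
      h1.mono_set (fun x hx => ⟨hx.2, Set.mem_Ici.2 (le_of_lt hx.1)⟩)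
    rw [hWm_def]
    rw [IntegrableOn, integrable_indicator_iff measurableSet_Ioi, IntegrableOn,
      Measure.restrict_restrict measurableSet_Ioi]
    exact h2
  -- a.e. convergence of mollifications
  have hae : ∀ᵐ x, ∀ m : ℕ,
      Tendsto (fun n => ((Φ n).normed volume ⋆[ContinuousLinearMap.lsmul ℝ ℝ, volume] Wm m) x)
        atTop (𝓝 (Wm m x)) := by
    rw [ae_all_iff]
    intro m
    exact ContDiffBump.ae_convolution_tendsto_right_of_locallyIntegrable hΦout
      (Eventually.of_forall hΦK) (hWm m)
  refine ⟨Set.Ioi T₀ ∩ {x | ¬ ∀ m : ℕ,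
      Tendsto (fun n => ((Φ n).normed volume ⋆[ContinuousLinearMap.lsmul ℝ ℝ, volume] Wm m) x)
        atTop (𝓝 (Wm m x))}, Set.inter_subset_left, ?_, ?_⟩
  · exact measure_mono_null Set.inter_subset_right (ae_iff.1 hae)
  intro s t hsN htN hT₀s hst
  have hsG : ∀ m : ℕ,
      Tendsto (fun n => ((Φ n).normed volume ⋆[ContinuousLinearMap.lsmul ℝ ℝ, volume] Wm m) s)
        atTop (𝓝 (Wm m s)) := by
    by_contra h; exact hsN ⟨hT₀s, h⟩
  have htG : ∀ m : ℕ,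
      Tendsto (fun n => ((Φ n).normed volume ⋆[ContinuousLinearMap.lsmul ℝ ℝ, volume] Wm m) t)
        atTop (𝓝 (Wm m t)) := by
    by_contra h; exact htN ⟨lt_trans hT₀s hst, h⟩
  obtain ⟨m, hm⟩ := exists_nat_one_div_lt (sub_pos.2 hT₀s)
  have ham : a m < s := by
    have : (1 : ℝ) / ((m : ℝ) + 1) < s - T₀ := hm
    simp only [ha_def]; linarith
  -- identify convolutions with explicit integrals
  have hconv : ∀ (c : ℝ), ∀ n : ℕ, (Φ n).rOut ≤ c - a m →
      ((Φ n).normed volume ⋆[ContinuousLinearMap.lsmul ℝ ℝ, volume] Wm m) c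
        = ∫ x, (Φ n).normed volume (c - x) * W x := by
    intro c n hn
    rw [convolution_eq_swap]
    simp only [ContinuousLinearMap.lsmul_apply, smul_eq_mul]
    refine integral_congr_ae (Eventually.of_forall fun x => ?_)
    by_cases hx : (Φ n).normed volume (c - x) = 0
    · simp [hx]
    · have hxball : c - x ∈ ball (0 : ℝ) (Φ n).rOut := by
        rw [← (Φ n).support_normed_eq (μ := volume)]; exact hx
      have hxa : x ∈ Set.Ioi (a m) := by
        simp only [mem_ball, dist_zero_right, Real.norm_eq_abs] at hxball
        have := abs_lt.1 hxball
        simp only [Set.mem_Ioi]; linarith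
      rw [hWm_def]
      simp only [indicator_of_mem hxa]
  -- eventual comparison between the mollified values at s and t
  have hmain : ∀ᶠ n in atTop,
      ((Φ n).normed volume ⋆[ContinuousLinearMap.lsmul ℝ ℝ, volume] Wm m) t
        ≤ ((Φ n).normed volume ⋆[ContinuousLinearMap.lsmul ℝ ℝ, volume] Wm m) s := by
    have hmin : (0:ℝ) < min (s - a m) ((t - s) / 2) :=
      lt_min (sub_pos.2 ham) (by linarith)
    filter_upwards [hΦout.eventually_lt_const hmin] with n hn
    set r := (Φ n).rOut with hr_def
    have hr0 : 0 < r := (Φ n).rOut_pos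
    have hrs : r < s - a m := lt_of_lt_of_le hn (min_le_left _ _)
    have hrt : r ≤ (t - s) / 2 := le_of_lt (lt_of_lt_of_le hn (min_le_right _ _))
    set ρ : ℝ → ℝ := (Φ n).normed volume with hρ_def
    have hρcont : Continuous ρ := ((Φ n).contDiff_normed (μ := volume) (n := ⊤)).continuous
    have hρnn : ∀ y, 0 ≤ ρ y := fun y => (Φ n).nonneg_normed y
    have hρ0 : ∀ y : ℝ, r ≤ |y| → ρ y = 0 := by
      intro y hy
      rw [← Function.notMem_support, hρ_def, (Φ n).support_normed_eq (μ := volume)]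
      simp only [mem_ball, dist_zero_right, Real.norm_eq_abs, not_lt, ← hr_def]
      exact hy
    have hT0r : T₀ < s - r := by linarith [ha m]
    have hstr : s + r ≤ t - r := by linarith
    -- the two translated bumps
    have hρs_cs : HasCompactSupport (fun u => ρ (s - u)) :=
      ((Φ n).hasCompactSupport_normed).comp_homeomorph (Homeomorph.subLeft s)
    have hρt_cs : HasCompactSupport (fun u => ρ (t - u)) :=
      ((Φ n).hasCompactSupport_normed).comp_homeomorph (Homeomorph.subLeft t)
    have hρs_cont : Continuous (fun u => ρ (s - u)) :=
      hρcont.comp (continuous_const.sub continuous_id)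
    have hρt_cont : Continuous (fun u => ρ (t - u)) :=
      hρcont.comp (continuous_const.sub continuous_id)
    have hρs_int : Integrable (fun u => ρ (s - u)) :=
      hρs_cont.integrable_of_hasCompactSupport hρs_cs
    have hρt_int : Integrable (fun u => ρ (t - u)) :=
      hρt_cont.integrable_of_hasCompactSupport hρt_cs
    have hρs_one : (∫ u, ρ (s - u)) = 1 := by
      rw [integral_sub_left_eq_self ρ volume s]; exact (Φ n).integral_normed
    have hρt_one : (∫ u, ρ (t - u)) = 1 := by
      rw [integral_sub_left_eq_self ρ volume t]; exact (Φ n).integral_normed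
    -- vanishing lemmas
    have hρs_lo : ∀ x, x ≤ s - r → ρ (s - x) = 0 := fun x hx =>
      hρ0 _ (by rw [abs_of_nonneg (by linarith)]; linarith)
    have hρs_hi : ∀ x, s + r ≤ x → ρ (s - x) = 0 := fun x hx =>
      hρ0 _ (by rw [abs_of_nonpos (by linarith)]; linarith)
    have hρt_lo : ∀ x, x ≤ t - r → ρ (t - x) = 0 := fun x hx =>
      hρ0 _ (by rw [abs_of_nonneg (by linarith)]; linarith)
    have hρt_hi : ∀ x, t + r ≤ x → ρ (t - x) = 0 := fun x hx =>
      hρ0 _ (by rw [abs_of_nonpos (by linarith)]; linarith)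
    -- the ramp test function
    set h : ℝ → ℝ := fun x => ρ (s - x) - ρ (t - x) with hh_def
    have hh_cont : Continuous h := hρs_cont.sub hρt_cont
    have hh_lo : ∀ x, x ≤ s - r → h x = 0 := by
      intro x hx
      rw [hh_def]
      simp only [hρs_lo x hx, hρt_lo x (by linarith), sub_zero]
    have hh_hi : ∀ x, t + r ≤ x → h x = 0 := by
      intro x hx
      rw [hh_def]
      simp only [hρs_hi x (by linarith), hρt_hi x hx, sub_zero]
    set ψ : ℝ → ℝ := fun x => ∫ u in T₀..x, h u with hψ_def
    have hψHD : ∀ x, HasDerivAt ψ (h x) x := fun x =>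
      intervalIntegral.integral_hasDerivAt_right (hh_cont.intervalIntegrable _ _)
        (hh_cont.stronglyMeasurableAtFilter _ _) hh_cont.continuousAt
    have hψ_deriv : deriv ψ = h := funext fun x => (hψHD x).deriv
    have hh_cd : ContDiff ℝ (⊤ : ℕ∞) h := by
      apply ContDiff.sub
      · exact ((Φ n).contDiff_normed (μ := volume)).comp (contDiff_const.sub contDiff_id)
      · exact ((Φ n).contDiff_normed (μ := volume)).comp (contDiff_const.sub contDiff_id)
    have hψ_cd : ContDiff ℝ (⊤ : ℕ∞) ψ :=
      contDiff_infty_iff_deriv.2 ⟨fun x => (hψHD x).differentiableAt, hψ_deriv ▸ hh_cd⟩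
    -- ψ vanishes outside [s-r, t+r]
    have hψ_lo : ∀ x, x ≤ s - r → ψ x = 0 := by
      intro x hx
      simp only [hψ_def]
      have : EqOn h (fun _ => (0:ℝ)) (Set.uIcc T₀ x) := by
        intro u hu
        apply hh_lo
        rcases Set.mem_uIcc.1 hu with h' | h' <;>
          [exact le_trans h'.2 hx; exact le_trans h'.2 (le_of_lt hT0r)]
      rw [intervalIntegral.integral_congr this, intervalIntegral.integral_zero]
    have hFs_full : ∀ x, s + r ≤ x → (∫ u in T₀..x, ρ (s - u)) = 1 := by
      intro x hx
      rw [intervalIntegral.integral_of_le (by linarith : T₀ ≤ x),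
        setIntegral_eq_integral_of_forall_compl_eq_zero, hρs_one]
      intro u hu
      simp only [Set.mem_Ioc, not_and_or, not_lt, not_le] at hu
      rcases hu with hu | hu
      · exact hρs_lo u (by linarith)
      · exact hρs_hi u (by linarith)
    have hFt_full : ∀ x, t + r ≤ x → (∫ u in T₀..x, ρ (t - u)) = 1 := by
      intro x hx
      rw [intervalIntegral.integral_of_le (by linarith : T₀ ≤ x),
        setIntegral_eq_integral_of_forall_compl_eq_zero, hρt_one]
      intro u hu
      simp only [Set.mem_Ioc, not_and_or, not_lt, not_le] at hu
      rcases hu with hu | hu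
      · exact hρt_lo u (by linarith)
      · exact hρt_hi u (by linarith)
    have hψ_split : ∀ x, ψ x = (∫ u in T₀..x, ρ (s - u)) - ∫ u in T₀..x, ρ (t - u) := by
      intro x
      simp only [hψ_def]
      exact intervalIntegral.integral_sub hρs_int.intervalIntegrable
        hρt_int.intervalIntegrable
    have hψ_hi : ∀ x, t + r ≤ x → ψ x = 0 := by
      intro x hx
      rw [hψ_split, hFs_full x (by linarith), hFt_full x hx, sub_self]
    have hψ_nonneg : ∀ x, 0 ≤ ψ x := by
      intro x
      rcases le_or_gt x (s - r) with hx | hx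
      · rw [hψ_lo x hx]
      rcases le_or_gt x (t - r) with hx2 | hx2
      · rw [hψ_split]
        have hFt0 : (∫ u in T₀..x, ρ (t - u)) = 0 := by
          have : EqOn (fun u => ρ (t - u)) (fun _ => (0:ℝ)) (Set.uIcc T₀ x) := by
            intro u hu
            apply hρt_lo
            rcases Set.mem_uIcc.1 hu with h' | h' <;>
              [exact le_trans h'.2 hx2; exact le_trans h'.2 (by linarith)]
          rw [intervalIntegral.integral_congr this, intervalIntegral.integral_zero]
        rw [hFt0, sub_zero]
        exact intervalIntegral.integral_nonneg (by linarith) (fun u _ => hρnn _)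
      · rw [hψ_split, hFs_full x (by linarith), sub_nonneg]
        rw [intervalIntegral.integral_of_le (by linarith : T₀ ≤ x)]
        calc (∫ u in Set.Ioc T₀ x, ρ (t - u))
            ≤ ∫ u, ρ (t - u) :=
              setIntegral_le_integral hρt_int (Eventually.of_forall fun u => hρnn _)
          _ = 1 := hρt_one
    have hψ_cs : HasCompactSupport ψ := by
      apply HasCompactSupport.intro (isCompact_Icc (a := s - r) (b := t + r))
      intro x hx
      simp only [Set.mem_Icc, not_and_or, not_le] at hx
      rcases hx with hx | hx
      · exact hψ_lo x hx.le
      · exact hψ_hi x hx.le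
    have hψ_ts : tsupport ψ ⊆ Set.Ioi T₀ := by
      refine (closure_minimal ?_ isClosed_Icc).trans
        (fun x (hx : x ∈ Set.Icc (s - r) (t + r)) => lt_of_lt_of_le hT0r hx.1)
      intro x hx
      simp only [Function.mem_support] at hx
      by_contra hxc
      simp only [Set.mem_Icc, not_and_or, not_le] at hxc
      rcases hxc with h' | h'
      · exact hx (hψ_lo x h'.le)
      · exact hx (hψ_hi x h'.le)
    have hkey := key ψ hψ_cd hψ_cs hψ_ts hψ_nonneg
    rw [hψ_deriv] at hkey
    -- split the integral
    have hIs : Integrable (fun x => ρ (s - x) * W x) := by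
      have := hInt (fun x => ρ (s - x) * e x) (hρs_cont.mul hconte) hρs_cs.mul_right ?_
      · have hfn : (fun x => ρ (s - x) * W x) = fun x => (ρ (s - x) * e x) * V x := by
          funext x; rw [hW_def]; ring
        rw [hfn]; exact this
      · refine (closure_minimal ?_ isClosed_Icc).trans
          (fun x (hx : x ∈ Set.Icc (s - r) (s + r)) => lt_of_lt_of_le hT0r hx.1)
        intro x hx
        simp only [Function.mem_support] at hx
        by_contra hxc
        simp only [Set.mem_Icc, not_and_or, not_le] at hxc
        rcases hxc with h' | h'
        · exact hx (by rw [hρs_lo x h'.le]; ring)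
        · exact hx (by rw [hρs_hi x h'.le]; ring)
    have hIt : Integrable (fun x => ρ (t - x) * W x) := by
      have := hInt (fun x => ρ (t - x) * e x) (hρt_cont.mul hconte) hρt_cs.mul_right ?_
      · have hfn : (fun x => ρ (t - x) * W x) = fun x => (ρ (t - x) * e x) * V x := by
          funext x; rw [hW_def]; ring
        rw [hfn]; exact this
      · refine (closure_minimal ?_ isClosed_Icc).trans
          (fun x (hx : x ∈ Set.Icc (t - r) (t + r)) =>
            lt_of_lt_of_le (by linarith : T₀ < t - r) hx.1)
        intro x hx
        simp only [Function.mem_support] at hx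
        by_contra hxc
        simp only [Set.mem_Icc, not_and_or, not_le] at hxc
        rcases hxc with h' | h'
        · exact hx (by rw [hρt_lo x h'.le]; ring)
        · exact hx (by rw [hρt_hi x h'.le]; ring)
    have hsplit2 : (∫ x, h x * W x)
        = (∫ x, ρ (s - x) * W x) - ∫ x, ρ (t - x) * W x := by
      have hfn : (fun x => h x * W x)
          = fun x => ρ (s - x) * W x - ρ (t - x) * W x := by
        funext x; rw [hh_def]; ring
      rw [hfn, integral_sub hIs hIt]
    rw [hsplit2] at hkey
    have hJ : (∫ x, ρ (t - x) * W x) ≤ ∫ x, ρ (s - x) * W x := by linarith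
    rw [hconv s n (by linarith), hconv t n (by linarith)]
    exact hJ
  -- pass to the limit
  have hWms : Wm m s = W s := by
    rw [hWm_def]; exact indicator_of_mem (by exact ham) W
  have hWmt : Wm m t = W t := by
    rw [hWm_def]; exact indicator_of_mem (by simp only [Set.mem_Ioi]; linarith) W
  have hs_tendsto := hsG m
  have ht_tendsto := htG m
  rw [hWms] at hs_tendsto
  rw [hWmt] at ht_tendsto
  have hWts : W t ≤ W s := le_of_tendsto_of_tendsto ht_tendsto hs_tendsto hmain
  simp only [hW_def, he_def] at hWts
  have het : (0:ℝ) < Real.exp (C₁ * t) := Real.exp_pos _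
  have hexp : Real.exp (-C₁ * (t - s)) = Real.exp (C₁ * s) / Real.exp (C₁ * t) := by
    rw [← Real.exp_sub]; ring_nf
  rw [hexp, ← mul_div_assoc, le_div_iff₀ het]
  nlinarith [hWts]
end

section
/- Let Ω ⊂ ℝ³ be a measurable set of finite positive Lebesgue measure, let F : Ω → ℝ be a bounded measurable function, and let γ > 1. Define S(k) := ∫_Ω ( ((γ−1)/γ) · max(F(x) − k, 0) )^{1/(γ−1)} dx. If k₀, k₁ ∈ ℝ satisfy S(k₀) = S(k₁) > 0, then k₀ = k₁. -/
open MeasureTheory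

theorem mass_function_injective_on_positivity
    (Ω : Set (Fin 3 → ℝ)) (hΩ : MeasurableSet Ω)
    (hΩpos : 0 < volume Ω) (hΩfin : volume Ω < ⊤)
    (F : (Fin 3 → ℝ) → ℝ) (hF : Measurable F)
    (hFbd : ∃ B : ℝ, ∀ x ∈ Ω, |F x| ≤ B)
    (γ : ℝ) (hγ : 1 < γ)
    (S : ℝ → ℝ)
    (hS : S = fun k => ∫ x in Ω, ((γ - 1) / γ * max (F x - k) 0) ^ (1 / (γ - 1)))
    (k₀ k₁ : ℝ) (heq : S k₀ = S k₁) (hpos : 0 < S k₁) :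
    k₀ = k₁ := by
  obtain ⟨B, hB⟩ := hFbd
  set c : ℝ := (γ - 1) / γ with hc
  set p : ℝ := 1 / (γ - 1) with hp
  have hγ1 : (0:ℝ) < γ - 1 := by linarith
  have hcpos : 0 < c := div_pos hγ1 (by linarith)
  have hppos : 0 < p := by positivity
  set g : ℝ → (Fin 3 → ℝ) → ℝ := fun k x => (c * max (F x - k) 0) ^ p with hg
  have hgnn : ∀ k x, 0 ≤ g k x := by
    intro k x
    exact Real.rpow_nonneg (mul_nonneg hcpos.le (le_max_right _ _)) _
  have hmeas : ∀ k, Measurable (g k) := by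
    intro k
    fun_prop
  have hint : ∀ k, IntegrableOn (g k) Ω := by
    intro k
    refine Measure.integrableOn_of_bounded (M := (c * (B + |k|)) ^ p) hΩfin.ne
      (hmeas k).aestronglyMeasurable ?_
    filter_upwards [ae_restrict_mem hΩ] with x hx
    rw [Real.norm_eq_abs, abs_of_nonneg (hgnn k x)]
    refine Real.rpow_le_rpow (mul_nonneg hcpos.le (le_max_right _ _)) ?_ hppos.le
    refine mul_le_mul_of_nonneg_left ?_ hcpos.le
    refine max_le ?_ ?_
    · have := hB x hx
      have := abs_le.1 this
      have := abs_nonneg k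
      nlinarith [le_abs_self k, neg_abs_le k]
    · nlinarith [hB x hx, abs_nonneg (F x), abs_nonneg k]
  have hsupp : ∀ k x, g k x ≠ 0 → k < F x := by
    intro k x hx
    by_contra h
    push_neg at h
    apply hx
    have : max (F x - k) 0 = 0 := max_eq_right (by linarith)
    rw [hg]
    simp only [this, mul_zero]
    exact Real.zero_rpow hppos.ne'
  -- key strict antitonicity claim
  have key : ∀ a b : ℝ, a < b → 0 < S b → S b < S a := by
    intro a b hab hSb
    have hposA : 0 < volume (Function.support (g b) ∩ Ω) := by
      rw [← setIntegral_pos_iff_support_of_nonneg_ae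
        (Filter.Eventually.of_forall fun x => hgnn b x) (hint b)]
      rw [hS] at hSb
      exact hSb
    have hA : 0 < volume ({x | b < F x} ∩ Ω) := by
      refine lt_of_lt_of_le hposA (measure_mono ?_)
      intro x ⟨hx1, hx2⟩
      exact ⟨hsupp b x hx1, hx2⟩
    -- pointwise inequality
    have hle : ∀ x, g b x ≤ g a x := by
      intro x
      refine Real.rpow_le_rpow (mul_nonneg hcpos.le (le_max_right _ _)) ?_ hppos.le
      exact mul_le_mul_of_nonneg_left (max_le_max (by linarith) le_rfl) hcpos.le
    have hlt : ∀ x, b < F x → g b x < g a x := by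
      intro x hx
      refine Real.rpow_lt_rpow (mul_nonneg hcpos.le (le_max_right _ _)) ?_ hppos
      have h1 : max (F x - b) 0 = F x - b := max_eq_left (by linarith)
      have h2 : max (F x - a) 0 = F x - a := max_eq_left (by linarith)
      rw [h1, h2]
      exact (mul_lt_mul_iff_right₀ hcpos).2 (by linarith)
    have hdiff : 0 < ∫ x in Ω, (g a x - g b x) := by
      rw [setIntegral_pos_iff_support_of_nonneg_ae
        (Filter.Eventually.of_forall fun x => sub_nonneg.2 (hle x))
        ((hint a).sub (hint b))]
      refine lt_of_lt_of_le hA (measure_mono ?_)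
      intro x ⟨hx1, hx2⟩
      exact ⟨(sub_pos.2 (hlt x hx1)).ne', hx2⟩
    rw [hS]
    rw [hS] at hSb
    have := integral_sub (hint a) (hint b)
    have : (∫ x in Ω, (g a x - g b x)) = (∫ x in Ω, g a x) - ∫ x in Ω, g b x :=
      integral_sub (hint a) (hint b)
    linarith [hdiff, this ▸ hdiff]
  rcases lt_trichotomy k₀ k₁ with h | h | h
  · have := key k₀ k₁ h hpos
    linarith
  · exact h
  · have hpos0 : 0 < S k₀ := heq ▸ hpos
    have := key k₁ k₀ h hpos0
    linarith
end

section
/- Let θ be a real number with 0 < θ ≤ 1/2 and let M > 0. Then there exists a constant C > 0, depending only on θ and M, such that for every b ∈ (0, M] and every a ≥ 0 one has (a^θ − b^θ)² ∫₀¹ (1−τ) (b^θ + τ(a^θ − b^θ))^{1/θ − 2} dτ ≤ C ( (a^θ − b^θ)² + |a^θ − b^θ|^{1/θ} ). -/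
open MeasureTheory

theorem taylor_remainder_integral_bound
    (θ M : ℝ) (hθ0 : 0 < θ) (hθ : θ ≤ 1 / 2) (hM : 0 < M) :
    ∃ C > 0, ∀ b : ℝ, 0 < b → b ≤ M → ∀ a : ℝ, 0 ≤ a →
      (a ^ θ - b ^ θ) ^ 2 *
          ∫ τ in (0 : ℝ)..1, (1 - τ) * (b ^ θ + τ * (a ^ θ - b ^ θ)) ^ (1 / θ - 2) ≤
        C * ((a ^ θ - b ^ θ) ^ 2 + |a ^ θ - b ^ θ| ^ (1 / θ)) := by
  set p : ℝ := 1 / θ - 2 with hp_def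
  have hp : 0 ≤ p := by
    rw [hp_def, sub_nonneg, le_div_iff₀ hθ0]; linarith
  refine ⟨(2 : ℝ) ^ p * (M ^ (θ * p) + 1), by positivity, ?_⟩
  intro b hb hbM a ha
  set v : ℝ := b ^ θ with hv_def
  set u : ℝ := a ^ θ with hu_def
  set d : ℝ := u - v with hd_def
  have hv : 0 < v := Real.rpow_pos_of_pos hb θ
  have hu : 0 ≤ u := Real.rpow_nonneg ha θ
  have hvM : v ≤ M ^ θ := Real.rpow_le_rpow hb.le hbM hθ0.le
  have hMθ : (0:ℝ) < M ^ θ := Real.rpow_pos_of_pos hM θ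
  -- pointwise bound on the base
  have hbase : ∀ τ ∈ Set.Icc (0:ℝ) 1, 0 ≤ v + τ * d ∧ v + τ * d ≤ M ^ θ + |d| := by
    intro τ hτ
    obtain ⟨h0, h1⟩ := hτ
    constructor
    · have : v + τ * d = (1 - τ) * v + τ * u := by ring
      rw [this]
      have h3 : 0 ≤ (1 - τ) * v := mul_nonneg (by linarith) hv.le
      have h4 : 0 ≤ τ * u := mul_nonneg h0 hu
      linarith
    · have h2 : τ * d ≤ |d| := by
        calc τ * d ≤ τ * |d| := by
              have := le_abs_self d; nlinarith
          _ ≤ 1 * |d| := by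
              have := abs_nonneg d; nlinarith
          _ = |d| := one_mul _
      linarith
  set K : ℝ := (M ^ θ + |d|) ^ p with hK_def
  have hKnn : 0 ≤ K := Real.rpow_nonneg (by positivity) p
  have hcont : Continuous fun τ : ℝ => (1 - τ) * (v + τ * d) ^ p := by
    have := Real.continuous_rpow_const hp
    fun_prop
  have hint : IntervalIntegrable (fun τ : ℝ => (1 - τ) * (v + τ * d) ^ p)
      volume 0 1 := hcont.intervalIntegrable 0 1
  have hIle : (∫ τ in (0:ℝ)..1, (1 - τ) * (v + τ * d) ^ p) ≤ K := by
    have hmono : ∀ τ ∈ Set.Icc (0:ℝ) 1, (1 - τ) * (v + τ * d) ^ p ≤ K := by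
      intro τ hτ
      obtain ⟨hb0, hb1⟩ := hbase τ hτ
      have h1 : (v + τ * d) ^ p ≤ K := Real.rpow_le_rpow hb0 hb1 hp
      have h2 : 0 ≤ (v + τ * d) ^ p := Real.rpow_nonneg hb0 p
      obtain ⟨h0, h1'⟩ := hτ
      nlinarith
    calc (∫ τ in (0:ℝ)..1, (1 - τ) * (v + τ * d) ^ p)
        ≤ ∫ _ in (0:ℝ)..1, K :=
          intervalIntegral.integral_mono_on (by norm_num) hint
            (intervalIntegrable_const) hmono
      _ = K := by simp
  -- bound K
  have hK2 : K ≤ 2 ^ p * (M ^ (θ * p) + |d| ^ p) := by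
    have habs : (0:ℝ) ≤ |d| := abs_nonneg d
    have hmax : M ^ θ + |d| ≤ 2 * max (M ^ θ) |d| := by
      rcases le_total (M ^ θ) |d| with h | h
      · rw [max_eq_right h]; linarith
      · rw [max_eq_left h]; linarith
    have h1 : K ≤ (2 * max (M ^ θ) |d|) ^ p :=
      Real.rpow_le_rpow (by positivity) hmax hp
    have h2 : (2 * max (M ^ θ) |d|) ^ p = 2 ^ p * (max (M ^ θ) |d|) ^ p :=
      Real.mul_rpow (by norm_num) (le_max_of_le_left hMθ.le)
    have h3 : (max (M ^ θ) |d|) ^ p ≤ M ^ (θ * p) + |d| ^ p := by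
      have hMp : (M ^ θ) ^ p = M ^ (θ * p) := (Real.rpow_mul hM.le θ p).symm
      rcases le_total (M ^ θ) |d| with h | h
      · rw [max_eq_right h]
        have := Real.rpow_nonneg (le_trans hMθ.le h : (0:ℝ) ≤ |d|) p
        have hMpn : 0 ≤ M ^ (θ * p) := Real.rpow_nonneg hM.le _
        linarith
      · rw [max_eq_left h, hMp]
        have := Real.rpow_nonneg habs p
        linarith
    calc K ≤ (2 * max (M ^ θ) |d|) ^ p := h1
      _ = 2 ^ p * (max (M ^ θ) |d|) ^ p := h2
      _ ≤ 2 ^ p * (M ^ (θ * p) + |d| ^ p) := by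
          have : (0:ℝ) ≤ (2:ℝ) ^ p := Real.rpow_nonneg (by norm_num) p
          nlinarith
  -- combine
  have hd2 : (0:ℝ) ≤ d ^ 2 := sq_nonneg d
  have h2p : (0:ℝ) < (2:ℝ) ^ p := Real.rpow_pos_of_pos (by norm_num) p
  have hstep : d ^ 2 * (∫ τ in (0:ℝ)..1, (1 - τ) * (v + τ * d) ^ p)
      ≤ 2 ^ p * (M ^ (θ * p) * d ^ 2 + d ^ 2 * |d| ^ p) := by
    have hIK : d ^ 2 * (∫ τ in (0:ℝ)..1, (1 - τ) * (v + τ * d) ^ p) ≤ d ^ 2 * K :=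
      mul_le_mul_of_nonneg_left hIle hd2
    have : d ^ 2 * K ≤ d ^ 2 * (2 ^ p * (M ^ (θ * p) + |d| ^ p)) :=
      mul_le_mul_of_nonneg_left hK2 hd2
    nlinarith
  have h2p0 : (2:ℝ) + p = 1 / θ := by rw [hp_def]; ring
  have hdfinal : d ^ 2 * |d| ^ p = |d| ^ (1 / θ) := by
    have hsq : d ^ 2 = |d| ^ (2:ℝ) := by
      rw [Real.rpow_two, sq_abs]
    rw [hsq, ← Real.rpow_add' (abs_nonneg d) (by rw [h2p0]; positivity), h2p0]
  have hMpn : 0 ≤ M ^ (θ * p) := Real.rpow_nonneg hM.le _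
  have habs1θ : 0 ≤ |d| ^ (1/θ) := Real.rpow_nonneg (abs_nonneg d) _
  calc d ^ 2 * (∫ τ in (0:ℝ)..1, (1 - τ) * (v + τ * d) ^ p)
      ≤ 2 ^ p * (M ^ (θ * p) * d ^ 2 + d ^ 2 * |d| ^ p) := hstep
    _ = 2 ^ p * (M ^ (θ * p) * d ^ 2 + |d| ^ (1/θ)) := by rw [hdfinal]
    _ ≤ 2 ^ p * (M ^ (θ * p) + 1) * (d ^ 2 + |d| ^ (1 / θ)) := by
        nlinarith [mul_nonneg (mul_nonneg h2p.le hMpn) habs1θ, mul_nonneg h2p.le hd2]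
end
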